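/- arXiv:2202.07813 — 6 statements merged into one kernel-verified Lean document; each statement's English description precedes it below -/
import Mathlib

section
/- Let T ≥ 0 and let M : [T,∞) → ℝ be continuous such that the improper integral ∫_t^∞ M(s) ds converges for every t ≥ T. Define q₁(t) := M(t), Q_k(t) := −∫_t^∞ q_k(s) ds for k ≥ 1, and q_k(t) := Σ_{j=1}^{k−1} Q_j(t) Q_{k−j}(t) for k ≥ 2, assuming all these improper integrals converge. Suppose that the series Σ_{k=1}^∞ Q_k(t) converges uniformly on compact subsets of [T,∞) and that the series Σ_{k=1}^∞ q_k(t) converges uniformly on compact subsets of [T,∞). Then the function b(t) := −Σ_{k=1}^∞ Q_k(t) is continuously differentiable on [T,∞) and satisfies the Riccati equation b'(t) + b(t)² + M(t) = 0 for all t ≥ T. -/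
/-!
Each `Q k` is minus the tail integral of `q k`, hence a primitive of it, so the partial sums of
`Σ Q_k` are primitives of those of `Σ q_k`. Locally uniform convergence lets us pass to the limit:
`-b t = -b T + ∫_T^t g` with `g = Σ q_k` continuous, i.e. `b' = -g`. Pointwise, `Σ_{k ≥ 2} q_k`
is the Cauchy square of `Σ Q_k`, and by Abel's theorem a convergent Cauchy product of convergent
series converges to the product of their sums, so `g = b² + M`.
-/

open MeasureTheory Filter Topology Set

theorem tendstoLocallyUniformlyOn_of_forall_isCompact {α β ι : Type*} [TopologicalSpace α]
    [WeaklyLocallyCompactSpace α] [UniformSpace β] {F : ι → α → β} {f : α → β} {p : Filter ι}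
    {s : Set α} (hs : IsClosed s) (h : ∀ K ⊆ s, IsCompact K → TendstoUniformlyOn F f p K) :
    TendstoLocallyUniformlyOn F f p s := by
  refine tendstoLocallyUniformlyOn_of_forall_exists_nhds fun x _ => ?_
  obtain ⟨K, hK, hKx⟩ := exists_compact_mem_nhds x
  exact ⟨s ∩ K, inter_mem_nhdsWithin s hKx, h _ inter_subset_left (hK.inter_left hs)⟩

namespace Real

theorem tsum_mul_pow_mul_tsum_mul_pow {a b : ℕ → ℝ}
    (ha : CauchySeq fun n => ∑ i ∈ Finset.range n, a i)
    (hb : CauchySeq fun n => ∑ i ∈ Finset.range n, b i) {x : ℝ} (hx : |x| < 1) :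
    (∑' n, a n * x ^ n) * (∑' n, b n * x ^ n) =
      ∑' n, (∑ k ∈ Finset.range (n + 1), a k * b (n - k)) * x ^ n := by
  rw [← Real.norm_eq_abs] at hx
  have hsa : Summable fun n => ‖a n * x ^ n‖ := (summable_powerSeries_of_norm_lt_one ha hx).abs
  have hsb : Summable fun n => ‖b n * x ^ n‖ := (summable_powerSeries_of_norm_lt_one hb hx).abs
  rw [tsum_mul_tsum_eq_tsum_sum_range_of_summable_norm hsa hsb]
  refine tsum_congr fun n => ?_
  rw [Finset.sum_mul]
  refine Finset.sum_congr rfl fun k hk => ?_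
  have hpow : x ^ n = x ^ k * x ^ (n - k) := by
    rw [← pow_add, Nat.add_sub_cancel' (Finset.mem_range_succ_iff.mp hk)]
  rw [hpow]
  ring

theorem eq_mul_of_tendsto_sum_range_cauchy_product {a b : ℕ → ℝ} {A B C : ℝ}
    (ha : Tendsto (fun n => ∑ i ∈ Finset.range n, a i) atTop (𝓝 A))
    (hb : Tendsto (fun n => ∑ i ∈ Finset.range n, b i) atTop (𝓝 B))
    (hc : Tendsto (fun n => ∑ i ∈ Finset.range n, ∑ k ∈ Finset.range (i + 1), a k * b (i - k))
      atTop (𝓝 C)) :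
    C = A * B := by
  have hprod : (fun x => (∑' n, a n * x ^ n) * (∑' n, b n * x ^ n)) =ᶠ[𝓝[<] 1]
      fun x => ∑' n, (∑ k ∈ Finset.range (n + 1), a k * b (n - k)) * x ^ n := by
    filter_upwards [Ioo_mem_nhdsLT (neg_lt_self one_pos)] with x hx
    exact tsum_mul_pow_mul_tsum_mul_pow ha.cauchySeq hb.cauchySeq (abs_lt.mpr hx)
  exact tendsto_nhds_unique (tendsto_tsum_powerSeries_nhdsWithin_lt hc)
    (((tendsto_tsum_powerSeries_nhdsWithin_lt ha).mul
      (tendsto_tsum_powerSeries_nhdsWithin_lt hb)).congr' hprod)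

end Real

section Primitive

variable {T : ℝ} {f : ℝ → ℝ}

theorem hasDerivWithinAt_integral_Ici (hf : ContinuousOn f (Ici T)) {t : ℝ} (ht : t ∈ Ici T) :
    HasDerivWithinAt (fun u => ∫ s in T..u, f s) (f t) (Ici T) t := by
  have hint : IntervalIntegrable f volume T t :=
    (hf.mono Icc_subset_Ici_self).intervalIntegrable_of_Icc ht
  have hf' : ContinuousOn f (Ioi T) := hf.mono Ioi_subset_Ici_self
  rcases (mem_Ici.mp ht).eq_or_lt with rfl | hlt
  · exact intervalIntegral.integral_hasDerivWithinAt_right hint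
      (hf'.stronglyMeasurableAtFilter_nhdsWithin measurableSet_Ioi T)
      ((hf T ht).mono Ioi_subset_Ici_self)
  · exact (intervalIntegral.integral_hasDerivAt_right hint
      (hf'.stronglyMeasurableAtFilter isOpen_Ioi t hlt)
      (hf'.continuousAt (Ioi_mem_nhds hlt))).hasDerivWithinAt

theorem hasDerivWithinAt_of_eq_add_integral {F : ℝ → ℝ} (hf : ContinuousOn f (Ici T))
    (hF : ∀ t ∈ Ici T, F t = F T + ∫ s in T..t, f s) {t : ℝ} (ht : t ∈ Ici T) :
    HasDerivWithinAt F (f t) (Ici T) t :=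
  ((hasDerivWithinAt_integral_Ici hf ht).const_add (F T)).congr hF (hF t ht)

theorem eq_add_integral_of_tendsto_integral_atTop {F : ℝ → ℝ}
    (hf : ∀ R ∈ Ici T, IntervalIntegrable f volume T R)
    (hF : ∀ t ∈ Ici T, Tendsto (fun R => ∫ s in t..R, f s) atTop (𝓝 (-F t)))
    {t : ℝ} (ht : t ∈ Ici T) : F t = F T + ∫ s in T..t, f s := by
  have hsplit : ∀ᶠ R in atTop, (∫ s in T..R, f s) - ∫ s in T..t, f s = ∫ s in t..R, f s := by
    filter_upwards [eventually_ge_atTop T] with R hR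
    exact intervalIntegral.integral_interval_sub_left (hf R hR) (hf t ht)
  have := tendsto_nhds_unique (hF t ht) (((hF T self_mem_Ici).sub_const _).congr' hsplit)
  linarith

theorem eq_add_integral_of_tendstoLocallyUniformlyOn {ι : Type*} {l : Filter ι}
    [l.IsCountablyGenerated] [l.NeBot] {F f : ι → ℝ → ℝ} {G g : ℝ → ℝ}
    (hFf : ∀ i, ∀ t ∈ Ici T, F i t = F i T + ∫ s in T..t, f i s)
    (hF : ∀ t ∈ Ici T, Tendsto (fun i => F i t) l (𝓝 (G t)))
    (hfc : ∀ i, ContinuousOn (f i) (Ici T)) (hf : TendstoLocallyUniformlyOn f g l (Ici T))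
    {t : ℝ} (ht : t ∈ Ici T) : G t = G T + ∫ s in T..t, g s := by
  have hsub : uIcc T t ⊆ Ici T := by
    rw [uIcc_of_le ht]; exact Icc_subset_Ici_self
  have hint : Tendsto (fun i => ∫ s in T..t, f i s) l (𝓝 (∫ s in T..t, g s)) :=
    ((tendstoLocallyUniformlyOn_iff_tendstoUniformlyOn_of_compact isCompact_uIcc).mp
      (hf.mono hsub)).tendsto_intervalIntegral_of_continuousOn
      (Eventually.of_forall fun i => (hfc i).mono hsub)
  exact tendsto_nhds_unique (hF t ht)
    (((hF T self_mem_Ici).add hint).congr fun i => (hFf i t ht).symm)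

end Primitive

theorem Finset.sum_Icc_one_eq_sum_range {M : Type*} [AddCommMonoid M] (f : ℕ → M) (n : ℕ) :
    ∑ k ∈ Finset.Icc 1 n, f k = ∑ i ∈ Finset.range n, f (i + 1) := by
  rw [← Finset.Ico_add_one_right_eq_Icc, Finset.sum_Ico_eq_sum_range, Nat.add_sub_cancel]
  simp only [add_comm 1]

section RiccatiSeries

variable {T : ℝ} {M : ℝ → ℝ} {q Q : ℕ → ℝ → ℝ}

theorem riccati_Q_eq_add_integral {k : ℕ} (hqc : ContinuousOn (q k) (Ici T))
    (hQ : ∀ t ≥ T, Tendsto (fun R => ∫ s in t..R, q k s) atTop (𝓝 (-(Q k t))))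
    {t : ℝ} (ht : t ∈ Ici T) : Q k t = Q k T + ∫ s in T..t, q k s :=
  eq_add_integral_of_tendsto_integral_atTop
    (fun _ hR => (hqc.mono Icc_subset_Ici_self).intervalIntegrable_of_Icc hR) hQ ht

theorem continuousOn_riccati_coeffs (hMc : ContinuousOn M (Ici T)) (hq1 : ∀ t, q 1 t = M t)
    (hqk : ∀ k, 2 ≤ k → ∀ t, q k t = ∑ j ∈ Finset.Ico 1 k, Q j t * Q (k - j) t)
    (hQ : ∀ k, 1 ≤ k → ∀ t ≥ T, Tendsto (fun R => ∫ s in t..R, q k s) atTop (𝓝 (-(Q k t))))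
    (k : ℕ) (hk : 1 ≤ k) : ContinuousOn (q k) (Ici T) ∧ ContinuousOn (Q k) (Ici T) := by
  induction k using Nat.strong_induction_on with
  | _ k ih =>
    have hqc : ContinuousOn (q k) (Ici T) := by
      obtain rfl | hk2 := hk.eq_or_lt
      · exact hMc.congr fun t _ => hq1 t
      · refine ContinuousOn.congr (f := fun t => ∑ j ∈ Finset.Ico 1 k, Q j t * Q (k - j) t)
          (continuousOn_finsetSum _ fun j hj => ?_) fun t _ => hqk k hk2 t
        obtain ⟨hj1, hjk⟩ := Finset.mem_Ico.mp hj
        exact (ih j hjk hj1).2.mul (ih (k - j) (by omega) (by omega)).2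
    refine ⟨hqc, fun t ht => ?_⟩
    exact (hasDerivWithinAt_of_eq_add_integral hqc
      (fun t ht => riccati_Q_eq_add_integral hqc (hQ k hk) ht) ht).continuousWithinAt

theorem riccati_sum_Q_eq_add_integral
    (hqc : ∀ k, 1 ≤ k → ContinuousOn (q k) (Ici T))
    (hQ : ∀ k, 1 ≤ k → ∀ t ≥ T, Tendsto (fun R => ∫ s in t..R, q k s) atTop (𝓝 (-(Q k t))))
    (n : ℕ) {t : ℝ} (ht : t ∈ Ici T) :
    ∑ k ∈ Finset.Icc 1 n, Q k t =
      ∑ k ∈ Finset.Icc 1 n, Q k T + ∫ s in T..t, ∑ k ∈ Finset.Icc 1 n, q k s := by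
  rw [intervalIntegral.integral_finsetSum fun k hk =>
    ((hqc k (Finset.mem_Icc.mp hk).1).mono Icc_subset_Ici_self).intervalIntegrable_of_Icc ht,
    ← Finset.sum_add_distrib]
  exact Finset.sum_congr rfl fun k hk =>
    riccati_Q_eq_add_integral (hqc k (Finset.mem_Icc.mp hk).1) (hQ k (Finset.mem_Icc.mp hk).1) ht

theorem riccati_sum_q_eq (hq1 : ∀ t, q 1 t = M t)
    (hqk : ∀ k, 2 ≤ k → ∀ t, q k t = ∑ j ∈ Finset.Ico 1 k, Q j t * Q (k - j) t) {t B G : ℝ}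
    (hQt : Tendsto (fun n => ∑ k ∈ Finset.Icc 1 n, Q k t) atTop (𝓝 B))
    (hqt : Tendsto (fun n => ∑ k ∈ Finset.Icc 1 n, q k t) atTop (𝓝 G)) :
    G = B ^ 2 + M t := by
  simp only [Finset.sum_Icc_one_eq_sum_range] at hQt hqt
  have hconv : ∀ i, q (i + 2) t =
      ∑ k ∈ Finset.range (i + 1), Q (k + 1) t * Q (i - k + 1) t := by
    intro i
    rw [hqk (i + 2) (by omega), Finset.sum_Ico_eq_sum_range]
    refine Finset.sum_congr (by congr 1) fun k hk => ?_
    have hki := Finset.mem_range_succ_iff.mp hk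
    rw [add_comm 1 k, show i + 2 - (k + 1) = i - k + 1 by omega]
  have hsq : Tendsto (fun n => ∑ i ∈ Finset.range n,
      ∑ k ∈ Finset.range (i + 1), Q (k + 1) t * Q (i - k + 1) t) atTop (𝓝 (G - M t)) := by
    rw [← tendsto_add_atTop_iff_nat 1] at hqt
    refine (hqt.sub_const (M t)).congr fun n => ?_
    simp only [Finset.sum_range_succ' _ n, hq1, hconv]
    ring
  have := Real.eq_mul_of_tendsto_sum_range_cauchy_product hQt hQt hsq
  rw [sq]
  linarith

end RiccatiSeries

theorem riccati_particular_solution_general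
    (T : ℝ)
    (M : ℝ → ℝ) (hMc : ContinuousOn M (Set.Ici T))
    (q Q : ℕ → ℝ → ℝ)
    (hq1 : ∀ t, q 1 t = M t)
    (hqk : ∀ k, 2 ≤ k → ∀ t, q k t = ∑ j ∈ Finset.Ico 1 k, Q j t * Q (k - j) t)
    -- `Q k t = -∫_t^∞ q k`, all these improper integrals being convergent
    (hQ : ∀ k, 1 ≤ k → ∀ t ≥ T,
      Tendsto (fun R => ∫ s in t..R, q k s) atTop (𝓝 (-(Q k t))))
    (b : ℝ → ℝ)
    -- the series `Σ_{k=1}^∞ Q_k` converges uniformly on compact subsets of `[T,∞)`,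
    -- with sum `-b`
    (hQu : ∀ Kc : Set ℝ, Kc ⊆ Set.Ici T → IsCompact Kc →
      TendstoUniformlyOn (fun n t => ∑ k ∈ Finset.Icc 1 n, Q k t)
        (fun t => -b t) atTop Kc)
    -- the series `Σ_{k=1}^∞ q_k` converges uniformly on compact subsets of `[T,∞)`
    (hqu : ∃ g : ℝ → ℝ, ∀ Kc : Set ℝ, Kc ⊆ Set.Ici T → IsCompact Kc →
      TendstoUniformlyOn (fun n t => ∑ k ∈ Finset.Icc 1 n, q k t)
        g atTop Kc) :
    ∃ b' : ℝ → ℝ, ContinuousOn b' (Set.Ici T) ∧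
      (∀ t ∈ Set.Ici T, HasDerivWithinAt b (b' t) (Set.Ici T) t) ∧
      ∀ t ≥ T, b' t + b t ^ 2 + M t = 0 := by
  obtain ⟨g, hqu⟩ := hqu
  have hQloc := tendstoLocallyUniformlyOn_of_forall_isCompact isClosed_Ici hQu
  have hqloc := tendstoLocallyUniformlyOn_of_forall_isCompact isClosed_Ici hqu
  have hqc (k : ℕ) (hk : 1 ≤ k) : ContinuousOn (q k) (Ici T) :=
    (continuousOn_riccati_coeffs hMc hq1 hqk hQ k hk).1
  have hsum_qc (n : ℕ) : ContinuousOn (fun t => ∑ k ∈ Finset.Icc 1 n, q k t) (Ici T) :=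
    continuousOn_finsetSum _ fun k hk => hqc k (Finset.mem_Icc.mp hk).1
  have hgc : ContinuousOn g (Ici T) := hqloc.continuousOn (Frequently.of_forall hsum_qc)
  have hb (t) (ht : t ∈ Ici T) : b t = b T + ∫ s in T..t, -g s := by
    have := eq_add_integral_of_tendstoLocallyUniformlyOn
      (fun n _ ht => riccati_sum_Q_eq_add_integral hqc hQ n ht)
      (fun _ ht => hQloc.tendsto_at ht) hsum_qc hqloc ht
    rw [intervalIntegral.integral_neg]
    linarith
  refine ⟨fun t => -g t, hgc.neg, fun t ht => hasDerivWithinAt_of_eq_add_integral hgc.neg hb ht,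
    fun t ht => ?_⟩
  show -g t + b t ^ 2 + M t = 0
  rw [riccati_sum_q_eq hq1 hqk (hQloc.tendsto_at ht) (hqloc.tendsto_at ht)]
  ring

/-- Lemma 3.1 of the paper (with the corrected sign): if the series `Σ Q_k` (and the
series `Σ q_k`) converge uniformly on compact subsets of `[T,∞)`, then
`b = -Σ_{k=1}^∞ Q_k` is continuously differentiable on `[T,∞)` and solves the
Riccati equation `b' + b² + M = 0`. -/
theorem riccati_particular_solution
    (T : ℝ) (hT : 0 ≤ T)
    (M : ℝ → ℝ) (hMc : ContinuousOn M (Set.Ici T))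
    (q Q : ℕ → ℝ → ℝ)
    (hq1 : ∀ t, q 1 t = M t)
    (hqk : ∀ k, 2 ≤ k → ∀ t, q k t = ∑ j ∈ Finset.Ico 1 k, Q j t * Q (k - j) t)
    -- `Q k t = -∫_t^∞ q k`, all these improper integrals being convergent
    (hQ : ∀ k, 1 ≤ k → ∀ t ≥ T,
      Tendsto (fun R => ∫ s in t..R, q k s) atTop (𝓝 (-(Q k t))))
    (b : ℝ → ℝ)
    -- the series `Σ_{k=1}^∞ Q_k` converges uniformly on compact subsets of `[T,∞)`,
    -- with sum `-b`
    (hQu : ∀ Kc : Set ℝ, Kc ⊆ Set.Ici T → IsCompact Kc →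
      TendstoUniformlyOn (fun n t => ∑ k ∈ Finset.Icc 1 n, Q k t)
        (fun t => -b t) atTop Kc)
    -- the series `Σ_{k=1}^∞ q_k` converges uniformly on compact subsets of `[T,∞)`
    (hqu : ∃ g : ℝ → ℝ, ∀ Kc : Set ℝ, Kc ⊆ Set.Ici T → IsCompact Kc →
      TendstoUniformlyOn (fun n t => ∑ k ∈ Finset.Icc 1 n, q k t)
        g atTop Kc) :
    ∃ b' : ℝ → ℝ, ContinuousOn b' (Set.Ici T) ∧
      (∀ t ∈ Set.Ici T, HasDerivWithinAt b (b' t) (Set.Ici T) t) ∧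
      ∀ t ≥ T, b' t + b t ^ 2 + M t = 0 :=
  riccati_particular_solution_general T M hMc q Q hq1 hqk hQ b hQu hqu
end

section
/- Let T ≥ 0 and let M : [T,∞) → ℝ be continuous such that the improper integral ∫_t^∞ M(s) ds converges for every t ≥ T. Define q₁(t) := M(t), Q_k(t) := −∫_t^∞ q_k(s) ds for k ≥ 1, and q_k(t) := Σ_{j=1}^{k−1} Q_j(t) Q_{k−j}(t) for k ≥ 2, assuming all these improper integrals converge, and set φ(t) := −∫_t^∞ Q₂(s) ds, assumed finite for every t ≥ T. Then Q₂(t) ≤ 0 for all t ≥ T, and for every integer k ≥ 2 and every t ≥ T one has |Q_k(t)| ≤ 4^{k−1} (−Q₂(t)) φ(t)^{(k−2)/2}. -/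
/-!
Since `q₂ = Q₁² ≥ 0`, `Q₂` is nonpositive and nondecreasing, `φ` is nonnegative and
nonincreasing, `∫_t^∞ Q₁² = -Q₂(t)` and `∫_t^∞ (-Q₂) = φ(t)`. By strong induction on `k`,
`|Q_k(t)| ≤ C_{k-1} (-Q₂(t)) φ(t)^{(k-2)/2}` with `C_n` the Catalan numbers: the pointwise bound
on `Q_j` gives `∫_t^∞ Q_j² ≤ C_{j-1}² (-Q₂(t)) φ(t)^{j-1}` (for `j = 1` this is the identity
above), Cauchy–Schwarz then bounds every term of `∫_t^∞ |q_k| ≤ Σ_j ∫_t^∞ |Q_j Q_{k-j}|`, and the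
constants add up to `C_{k-1}` by the Catalan recursion. Finally `C_{k-1} ≤ 4^{k-1}`.
-/

open MeasureTheory Filter Topology Set intervalIntegral

theorem catalan_le_four_pow (n : ℕ) : catalan n ≤ 4 ^ n :=
  (catalan_eq_centralBinom_div n ▸ Nat.div_le_self _ _).trans n.centralBinom_le_four_pow

theorem sum_Ico_catalan_mul_catalan {k : ℕ} (hk : 2 ≤ k) :
    ∑ j ∈ Finset.Ico 1 k, catalan (j - 1) * catalan (k - j - 1) = catalan (k - 1) := by
  obtain ⟨n, rfl⟩ : ∃ n, k = n + 2 := ⟨k - 2, by omega⟩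
  rw [Finset.sum_Ico_eq_sum_range, show n + 2 - 1 = n + 1 by omega, catalan_succ,
    Fin.sum_univ_eq_sum_range (fun i => catalan i * catalan (n - i))]
  refine Finset.sum_congr rfl fun i _ => ?_
  congr 2 <;> omega

theorem integral_abs_mul_le_sqrt_mul_sqrt {t R : ℝ} (htR : t ≤ R) {f g : ℝ → ℝ}
    (hf : ContinuousOn f (Icc t R)) (hg : ContinuousOn g (Icc t R)) :
    ∫ s in t..R, |f s * g s| ≤ √(∫ s in t..R, f s ^ 2) * √(∫ s in t..R, g s ^ 2) := by
  let μ : Measure ℝ := volume.restrict (Ioc t R)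
  have : IsFiniteMeasure μ := isFiniteMeasure_restrict.2 measure_Ioc_lt_top.ne
  have hmem : ∀ {h : ℝ → ℝ}, ContinuousOn h (Icc t R) → MemLp h (ENNReal.ofReal 2) μ := by
    intro h hh
    obtain ⟨C, hC⟩ := isCompact_Icc.exists_bound_of_continuousOn hh
    exact MemLp.of_bound ((hh.mono Ioc_subset_Icc_self).aestronglyMeasurable measurableSet_Ioc)
      C ((ae_restrict_mem measurableSet_Ioc).mono fun x hx => hC x (Ioc_subset_Icc_self hx))
  have hsq : ∀ h : ℝ → ℝ, ∫ s in t..R, h s ^ 2 = ∫ s, ‖h s‖ ^ (2 : ℝ) ∂μ := fun h => by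
    simp [integral_of_le htR, μ]
  rw [hsq f, hsq g, Real.sqrt_eq_rpow, Real.sqrt_eq_rpow, integral_of_le htR]
  simpa [abs_mul] using
    integral_mul_norm_le_Lp_mul_Lq Real.HolderConjugate.two_two (hmem hf) (hmem hg)

section TailIntegral

variable {f F : ℝ → ℝ} {T : ℝ}

theorem ContinuousOn.intervalIntegrable_of_Ici (hf : ContinuousOn f (Ici T)) {a b : ℝ}
    (ha : T ≤ a) (hb : T ≤ b) : IntervalIntegrable f volume a b :=
  (hf.mono fun _ hs => (le_inf ha hb).trans hs.1).intervalIntegrable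

theorem integral_eq_sub_of_tendsto_integral (hf : ContinuousOn f (Ici T))
    (hF : ∀ t ≥ T, Tendsto (fun R => ∫ s in t..R, f s) atTop (𝓝 (-F t)))
    {a b : ℝ} (ha : T ≤ a) (hb : T ≤ b) : ∫ s in a..b, f s = F b - F a := by
  have hsplit : Tendsto (fun R => ∫ s in a..R, f s) atTop (𝓝 ((∫ s in a..b, f s) + -F b)) :=
    (tendsto_const_nhds.add (hF b hb)).congr' <| by
      filter_upwards [eventually_ge_atTop b] with R hR
      exact integral_add_adjacent_intervals (hf.intervalIntegrable_of_Ici ha hb)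
        (hf.intervalIntegrable_of_Ici hb (hb.trans hR))
  linarith [tendsto_nhds_unique (hF a ha) hsplit]

theorem continuousOn_of_tendsto_integral (hf : ContinuousOn f (Ici T))
    (hF : ∀ t ≥ T, Tendsto (fun R => ∫ s in t..R, f s) atTop (𝓝 (-F t))) :
    ContinuousOn F (Ici T) := by
  intro x hx
  have hTx : T ≤ x + 1 := by linarith [mem_Ici.1 hx]
  have hprim : ContinuousOn (fun b => F T + ∫ s in T..b, f s) (Icc T (x + 1)) := by
    rw [← uIcc_of_le hTx]
    exact continuousOn_const.add
      (continuousOn_primitive_interval' (hf.intervalIntegrable_of_Ici le_rfl hTx) left_mem_uIcc)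
  have hF_eq : EqOn F (fun b => F T + ∫ s in T..b, f s) (Icc T (x + 1)) := fun b hb => by
    simp only [integral_eq_sub_of_tendsto_integral hf hF le_rfl hb.1, add_sub_cancel]
  exact (hprim.congr hF_eq x ⟨hx, by linarith⟩).mono_of_mem_nhdsWithin
    (inter_mem_nhdsWithin _ (Iic_mem_nhds (lt_add_one x)))

theorem integral_le_of_tendsto_integral_of_nonneg {t L : ℝ} (hf : ContinuousOn f (Ici t))
    (hf_nonneg : ∀ s ≥ t, 0 ≤ f s) (hL : Tendsto (fun R => ∫ s in t..R, f s) atTop (𝓝 L))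
    {R : ℝ} (hR : t ≤ R) : ∫ s in t..R, f s ≤ L :=
  ge_of_tendsto hL <| by
    filter_upwards [eventually_ge_atTop R] with R' hR'
    exact integral_mono_interval le_rfl hR hR'
      ((ae_restrict_mem measurableSet_Ioc).mono fun s hs => hf_nonneg s hs.1.le)
      (hf.intervalIntegrable_of_Ici le_rfl (hR.trans hR'))

end TailIntegral

/-- The integrals `Q k t = -∫_t^∞ q k` and `φ t = -∫_t^∞ Q 2` may converge only conditionally,
hence are limits of interval integrals. -/
structure IsTailHierarchy (T : ℝ) (q Q : ℕ → ℝ → ℝ) (φ : ℝ → ℝ) : Prop where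
  continuousOn_one : ContinuousOn (q 1) (Ici T)
  eq_sum : ∀ k, 2 ≤ k → ∀ t, q k t = ∑ j ∈ Finset.Ico 1 k, Q j t * Q (k - j) t
  tendsto_integral : ∀ k, 1 ≤ k → ∀ t ≥ T,
    Tendsto (fun R => ∫ s in t..R, q k s) atTop (𝓝 (-Q k t))
  tendsto_integral_Q_two : ∀ t ≥ T, Tendsto (fun R => ∫ s in t..R, Q 2 s) atTop (𝓝 (-φ t))

namespace IsTailHierarchy

variable {T : ℝ} {q Q : ℕ → ℝ → ℝ} {φ : ℝ → ℝ}

theorem continuousOn_q_of_Q (h : IsTailHierarchy T q Q φ) {k : ℕ} (hk : 1 ≤ k)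
    (hQ : ∀ j, 1 ≤ j → j < k → ContinuousOn (Q j) (Ici T)) : ContinuousOn (q k) (Ici T) := by
  rcases hk.eq_or_lt with rfl | hk
  · exact h.continuousOn_one
  · refine (continuousOn_finsetSum _ fun j hj => ?_).congr fun t _ => h.eq_sum k hk t
    obtain ⟨hj1, hjk⟩ := Finset.mem_Ico.1 hj
    exact (hQ j hj1 hjk).mul (hQ (k - j) (by omega) (by omega))

theorem continuousOn_Q (h : IsTailHierarchy T q Q φ) (k : ℕ) (hk : 1 ≤ k) :
    ContinuousOn (Q k) (Ici T) := by
  induction k using Nat.strong_induction_on with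
  | _ k ih =>
    exact continuousOn_of_tendsto_integral
      (h.continuousOn_q_of_Q hk fun j hj hjk => ih j hjk hj) (h.tendsto_integral k hk)

theorem continuousOn_q (h : IsTailHierarchy T q Q φ) {k : ℕ} (hk : 1 ≤ k) :
    ContinuousOn (q k) (Ici T) :=
  h.continuousOn_q_of_Q hk fun j hj _ => h.continuousOn_Q j hj

theorem q_two_eq (h : IsTailHierarchy T q Q φ) (t : ℝ) : q 2 t = Q 1 t ^ 2 := by
  simp [h.eq_sum 2 le_rfl t, sq]

theorem integral_sq_Q_one_le (h : IsTailHierarchy T q Q φ) {t R : ℝ} (ht : T ≤ t)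
    (hR : t ≤ R) : ∫ s in t..R, Q 1 s ^ 2 ≤ -Q 2 t := by
  simp_rw [← h.q_two_eq]
  exact integral_le_of_tendsto_integral_of_nonneg ((h.continuousOn_q one_le_two).mono
    (Ici_subset_Ici.2 ht)) (fun s _ => h.q_two_eq s ▸ sq_nonneg _)
    (h.tendsto_integral 2 one_le_two t ht) hR

theorem Q_two_nonpos (h : IsTailHierarchy T q Q φ) {t : ℝ} (ht : T ≤ t) : Q 2 t ≤ 0 := by
  simpa using h.integral_sq_Q_one_le ht le_rfl

theorem Q_two_monotoneOn (h : IsTailHierarchy T q Q φ) : MonotoneOn (Q 2) (Ici T) :=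
  fun a ha b hb hab => sub_nonneg.1 <| by
    rw [← integral_eq_sub_of_tendsto_integral (h.continuousOn_q one_le_two)
      (h.tendsto_integral 2 one_le_two) ha hb]
    exact integral_nonneg hab fun s _ => h.q_two_eq s ▸ sq_nonneg _

theorem integral_neg_Q_two_le (h : IsTailHierarchy T q Q φ) {t R : ℝ} (ht : T ≤ t)
    (hR : t ≤ R) : ∫ s in t..R, -Q 2 s ≤ φ t :=
  integral_le_of_tendsto_integral_of_nonneg
    ((h.continuousOn_Q 2 one_le_two).neg.mono (Ici_subset_Ici.2 ht))
    (fun s hs => neg_nonneg.2 (h.Q_two_nonpos (ht.trans hs)))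
    (by simpa [intervalIntegral.integral_neg] using (h.tendsto_integral_Q_two t ht).neg) hR

theorem phi_nonneg (h : IsTailHierarchy T q Q φ) {t : ℝ} (ht : T ≤ t) : 0 ≤ φ t := by
  simpa using h.integral_neg_Q_two_le ht le_rfl

theorem phi_antitoneOn (h : IsTailHierarchy T q Q φ) : AntitoneOn φ (Ici T) :=
  fun a ha b hb hab => sub_nonpos.1 <| by
    rw [← integral_eq_sub_of_tendsto_integral (h.continuousOn_Q 2 one_le_two)
      h.tendsto_integral_Q_two ha hb]
    simpa [intervalIntegral.integral_neg] using
      integral_nonneg hab fun s hs => neg_nonneg.2 (h.Q_two_nonpos (le_trans ha hs.1))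

theorem integral_sq_le_of_abs_le (h : IsTailHierarchy T q Q φ) {g : ℝ → ℝ}
    (hg : ContinuousOn g (Ici T)) {c : ℝ} {n : ℕ}
    (hg_le : ∀ s ≥ T, |g s| ≤ c * -Q 2 s * √(φ s) ^ n) {t R : ℝ} (ht : T ≤ t) (hR : t ≤ R) :
    ∫ s in t..R, g s ^ 2 ≤ (c * √(-Q 2 t) * √(φ t) ^ (n + 1)) ^ 2 := by
  have hQt : 0 ≤ -Q 2 t := neg_nonneg.2 (h.Q_two_nonpos ht)
  have hφt : 0 ≤ φ t := h.phi_nonneg ht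
  have hpt : ∀ s ∈ Icc t R, g s ^ 2 ≤ c ^ 2 * -Q 2 t * φ t ^ n * -Q 2 s := by
    intro s ⟨hts, _⟩
    have hs : T ≤ s := ht.trans hts
    have hQs : 0 ≤ -Q 2 s := neg_nonneg.2 (h.Q_two_nonpos hs)
    have hφs : 0 ≤ φ s := h.phi_nonneg hs
    calc g s ^ 2 ≤ (c * -Q 2 s * √(φ s) ^ n) ^ 2 :=
          sq_le_sq.2 ((hg_le s hs).trans (le_abs_self _))
      _ = c ^ 2 * -Q 2 s * φ s ^ n * -Q 2 s := by
          rw [mul_pow, mul_pow, ← pow_mul, mul_comm n, pow_mul, Real.sq_sqrt hφs]; ring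
      _ ≤ c ^ 2 * -Q 2 t * φ t ^ n * -Q 2 s := by
          gcongr
          · exact h.Q_two_monotoneOn ht hs hts
          · exact h.phi_antitoneOn ht hs hts
  have hint : ∀ {f : ℝ → ℝ}, ContinuousOn f (Ici T) → IntervalIntegrable f volume t R :=
    fun hf => hf.intervalIntegrable_of_Ici ht (ht.trans hR)
  calc ∫ s in t..R, g s ^ 2
      ≤ ∫ s in t..R, c ^ 2 * -Q 2 t * φ t ^ n * -Q 2 s :=
        integral_mono_on hR (hint (hg.pow 2))
          (hint (continuousOn_const.mul (h.continuousOn_Q 2 one_le_two).neg)) hpt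
    _ = c ^ 2 * -Q 2 t * φ t ^ n * ∫ s in t..R, -Q 2 s := integral_const_mul _ _
    _ ≤ c ^ 2 * -Q 2 t * φ t ^ n * φ t := by
        gcongr
        exact h.integral_neg_Q_two_le ht hR
    _ = (c * √(-Q 2 t) * √(φ t) ^ (n + 1)) ^ 2 := by
        rw [mul_pow, mul_pow, ← pow_mul, mul_comm (n + 1), pow_mul, Real.sq_sqrt hφt,
          Real.sq_sqrt hQt]
        ring

theorem abs_Q_le_of_integral_sq_le (h : IsTailHierarchy T q Q φ) {k : ℕ} (hk : 2 ≤ k)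
    {t : ℝ} (ht : T ≤ t)
    (hL2 : ∀ j ∈ Finset.Ico 1 k, ∀ R ≥ t,
      ∫ s in t..R, Q j s ^ 2 ≤ (catalan (j - 1) * √(-Q 2 t) * √(φ t) ^ (j - 1)) ^ 2) :
    |Q k t| ≤ catalan (k - 1) * -Q 2 t * √(φ t) ^ (k - 2) := by
  have hQt : 0 ≤ -Q 2 t := neg_nonneg.2 (h.Q_two_nonpos ht)
  have hcont : ∀ {j}, j ∈ Finset.Ico 1 k → ContinuousOn (Q j) (Ici t) := fun hj =>
    (h.continuousOn_Q _ (Finset.mem_Ico.1 hj).1).mono (Ici_subset_Ici.2 ht)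
  have hcompl : ∀ {j}, j ∈ Finset.Ico 1 k → k - j ∈ Finset.Ico 1 k := fun hj => by
    simp only [Finset.mem_Ico] at hj ⊢
    omega
  have hlim : Tendsto (fun R => |∫ s in t..R, q k s|) atTop (𝓝 |Q k t|) := by
    simpa using (h.tendsto_integral k (by omega) t ht).abs
  refine le_of_tendsto hlim ?_
  filter_upwards [eventually_ge_atTop t] with R hR
  have hterm : ∀ j ∈ Finset.Ico 1 k, |∫ s in t..R, Q j s * Q (k - j) s| ≤
      catalan (j - 1) * catalan (k - j - 1) * (-Q 2 t * √(φ t) ^ (k - 2)) := by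
    intro j hj
    obtain ⟨hj1, hjk⟩ := Finset.mem_Ico.1 hj
    calc |∫ s in t..R, Q j s * Q (k - j) s| ≤ ∫ s in t..R, |Q j s * Q (k - j) s| :=
          abs_integral_le_integral_abs hR
      _ ≤ √(∫ s in t..R, Q j s ^ 2) * √(∫ s in t..R, Q (k - j) s ^ 2) :=
          integral_abs_mul_le_sqrt_mul_sqrt hR ((hcont hj).mono Icc_subset_Ici_self)
            ((hcont (hcompl hj)).mono Icc_subset_Ici_self)
      _ ≤ (catalan (j - 1) * √(-Q 2 t) * √(φ t) ^ (j - 1)) *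
            (catalan (k - j - 1) * √(-Q 2 t) * √(φ t) ^ (k - j - 1)) := by
          gcongr
          · exact Real.sqrt_le_iff.2 ⟨by positivity, hL2 j hj R hR⟩
          · exact Real.sqrt_le_iff.2 ⟨by positivity, hL2 (k - j) (hcompl hj) R hR⟩
      _ = catalan (j - 1) * catalan (k - j - 1) * (-Q 2 t * √(φ t) ^ (k - 2)) := by
          rw [show k - 2 = (j - 1) + (k - j - 1) by omega, pow_add]
          linear_combination (catalan (j - 1) * catalan (k - j - 1) * √(φ t) ^ (j - 1) *
            √(φ t) ^ (k - j - 1) : ℝ) * Real.mul_self_sqrt hQt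
  have hcat : ∑ j ∈ Finset.Ico 1 k, (catalan (j - 1) * catalan (k - j - 1) : ℝ) =
      catalan (k - 1) := by
    exact_mod_cast sum_Ico_catalan_mul_catalan hk
  calc |∫ s in t..R, q k s| = |∑ j ∈ Finset.Ico 1 k, ∫ s in t..R, Q j s * Q (k - j) s| := by
        rw [integral_congr fun s _ => h.eq_sum k hk s,
          integral_finsetSum (f := fun j s => Q j s * Q (k - j) s) fun j hj =>
            ((hcont hj).mul (hcont (hcompl hj))).intervalIntegrable_of_Ici
              le_rfl hR]
    _ ≤ ∑ j ∈ Finset.Ico 1 k, |∫ s in t..R, Q j s * Q (k - j) s| :=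
        Finset.abs_sum_le_sum_abs _ _
    _ ≤ ∑ j ∈ Finset.Ico 1 k, catalan (j - 1) * catalan (k - j - 1) *
          (-Q 2 t * √(φ t) ^ (k - 2)) := Finset.sum_le_sum hterm
    _ = catalan (k - 1) * -Q 2 t * √(φ t) ^ (k - 2) := by rw [← Finset.sum_mul, hcat, mul_assoc]

theorem abs_Q_le_catalan (h : IsTailHierarchy T q Q φ) (k : ℕ) (hk : 2 ≤ k) {t : ℝ}
    (ht : T ≤ t) : |Q k t| ≤ catalan (k - 1) * -Q 2 t * √(φ t) ^ (k - 2) := by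
  induction k using Nat.strong_induction_on generalizing t with
  | _ k ih =>
    refine h.abs_Q_le_of_integral_sq_le hk ht fun j hj R hR => ?_
    obtain ⟨hj1, hjk⟩ := Finset.mem_Ico.1 hj
    rcases hj1.eq_or_lt with rfl | hj2
    · simpa [Real.sq_sqrt (neg_nonneg.2 (h.Q_two_nonpos ht))] using
        h.integral_sq_Q_one_le ht hR
    · have := h.integral_sq_le_of_abs_le (h.continuousOn_Q j hj1)
        (fun s hs => ih j hjk hj2 hs) ht hR
      rwa [show j - 2 + 1 = j - 1 by omega] at this

end IsTailHierarchy

theorem Qk_estimate_general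
    (T : ℝ)
    (M : ℝ → ℝ) (hMc : ContinuousOn M (Set.Ici T))
    (q Q : ℕ → ℝ → ℝ)
    (hq1 : ∀ t, q 1 t = M t)
    (hqk : ∀ k, 2 ≤ k → ∀ t, q k t = ∑ j ∈ Finset.Ico 1 k, Q j t * Q (k - j) t)
    -- `Q k t = -∫_t^∞ q k`, all these improper integrals being convergent
    (hQ : ∀ k, 1 ≤ k → ∀ t ≥ T,
      Tendsto (fun R => ∫ s in t..R, q k s) atTop (𝓝 (-(Q k t))))
    -- `φ t = -∫_t^∞ Q₂`, assumed finite for every `t ≥ T`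
    (φ : ℝ → ℝ)
    (hφ : ∀ t ≥ T,
      Tendsto (fun R => ∫ s in t..R, Q 2 s) atTop (𝓝 (-(φ t)))) :
    ∀ t ≥ T, Q 2 t ≤ 0 ∧
      ∀ k : ℕ, 2 ≤ k →
        |Q k t| ≤ 4 ^ (k - 1) * (-(Q 2 t)) * φ t ^ (((k : ℝ) - 2) / 2) := by
  have h : IsTailHierarchy T q Q φ := ⟨hMc.congr fun t _ => hq1 t, hqk, hQ, hφ⟩
  intro t ht
  refine ⟨h.Q_two_nonpos ht, fun k hk => (h.abs_Q_le_catalan k hk ht).trans ?_⟩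
  have hφt : 0 ≤ φ t := h.phi_nonneg ht
  have hpow : √(φ t) ^ (k - 2) = φ t ^ (((k : ℝ) - 2) / 2) := by
    rw [Real.sqrt_eq_rpow, ← Real.rpow_natCast, ← Real.rpow_mul hφt, Nat.cast_sub hk]
    ring_nf
  rw [hpow]
  gcongr
  · exact neg_nonneg.2 (h.Q_two_nonpos ht)
  · exact_mod_cast catalan_le_four_pow (k - 1)

/-- Lemma 3.2 of the paper: `Q₂ ≤ 0` and, for every `k ≥ 2`,
`|Q_k(t)| ≤ 4^(k-1) (-Q₂(t)) φ(t)^((k-2)/2)` where `φ(t) = -∫_t^∞ Q₂`. -/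
theorem Qk_estimate
    (T : ℝ) (hT : 0 ≤ T)
    (M : ℝ → ℝ) (hMc : ContinuousOn M (Set.Ici T))
    (q Q : ℕ → ℝ → ℝ)
    (hq1 : ∀ t, q 1 t = M t)
    (hqk : ∀ k, 2 ≤ k → ∀ t, q k t = ∑ j ∈ Finset.Ico 1 k, Q j t * Q (k - j) t)
    -- `Q k t = -∫_t^∞ q k`, all these improper integrals being convergent
    (hQ : ∀ k, 1 ≤ k → ∀ t ≥ T,
      Tendsto (fun R => ∫ s in t..R, q k s) atTop (𝓝 (-(Q k t))))
    -- `φ t = -∫_t^∞ Q₂`, assumed finite for every `t ≥ T`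
    (φ : ℝ → ℝ)
    (hφ : ∀ t ≥ T,
      Tendsto (fun R => ∫ s in t..R, Q 2 s) atTop (𝓝 (-(φ t)))) :
    ∀ t ≥ T, Q 2 t ≤ 0 ∧
      ∀ k : ℕ, 2 ≤ k →
        |Q k t| ≤ 4 ^ (k - 1) * (-(Q 2 t)) * φ t ^ (((k : ℝ) - 2) / 2) :=
  Qk_estimate_general T M hMc q Q hq1 hqk hQ φ hφ
end

section
/- Let T ≥ 0 and let Q₁ : [T,∞) → ℝ be continuous with ∫_t^∞ Q₁(s)² ds < ∞ for every t ≥ T. Set Q₂(t) := −∫_t^∞ Q₁(s)² ds and φ(t) := −∫_t^∞ Q₂(s) ds, assumed finite for every t ≥ T. Then for every integer m ≥ 1 and every t ≥ T one has ∫_t^∞ Q₂(s)² φ(s)^{m−1} ds ≤ (−Q₂(t)) φ(t)^m / m. -/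
/-!
Since `Q₂' = Q₁² ≥ 0` and `Q₂ → 0`, `-Q₂` is nonnegative and nonincreasing; likewise
`φ' = Q₂ ≤ 0` and `φ → 0` give `φ ≥ 0`. Writing `Q₂² φ^(m-1) = (-Q₂) · (-Q₂ φ^(m-1))` and
bounding the first factor by its value at `t`, the integral is at most
`-Q₂(t) ∫_t^∞ -(φ^m / m)' = -Q₂(t) φ(t)^m / m`.
-/

open MeasureTheory Filter Topology Set

section TailIntegral

variable {f F : ℝ → ℝ} {a : ℝ}

lemma eq_intervalIntegral_sub_of_eq_neg_integral_Ioi (hi : IntegrableOn f (Ioi a))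
    (hF : ∀ u ≥ a, F u = -∫ s in Ioi u, f s) {u : ℝ} (hu : a ≤ u) :
    F u = (∫ s in a..u, f s) - ∫ s in Ioi a, f s := by
  rw [hF u hu, ← intervalIntegral.integral_Ioi_sub_Ioi hi hu]
  ring

lemma hasDerivAt_of_eq_neg_integral_Ioi (hi : IntegrableOn f (Ioi a))
    (hF : ∀ u ≥ a, F u = -∫ s in Ioi u, f s) {x : ℝ} (hx : a < x) (hf : ContinuousAt f x) :
    HasDerivAt F (f x) x := by
  have hprimitive : HasDerivAt (fun u => ∫ s in a..u, f s) (f x) x :=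
    intervalIntegral.integral_hasDerivAt_right
      ((intervalIntegrable_iff_integrableOn_Ioc_of_le hx.le).2 (hi.mono_set Ioc_subset_Ioi_self))
      (AEStronglyMeasurable.stronglyMeasurableAtFilter_of_mem hi.aestronglyMeasurable
        (Ioi_mem_nhds hx)) hf
  refine (hprimitive.sub_const (∫ s in Ioi a, f s)).congr_of_eventuallyEq ?_
  filter_upwards [Ioi_mem_nhds hx] with u hu
  exact eq_intervalIntegral_sub_of_eq_neg_integral_Ioi hi hF (le_of_lt hu)

lemma continuousWithinAt_Ici_of_eq_neg_integral_Ioi (hi : IntegrableOn f (Ioi a))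
    (hF : ∀ u ≥ a, F u = -∫ s in Ioi u, f s) : ContinuousWithinAt F (Ici a) a := by
  have hprimitive : ContinuousWithinAt (fun u => ∫ s in a..u, f s) (Icc a (a + 1)) a := by
    have hIcc : IntegrableOn f (uIcc a (a + 1)) := by
      rw [uIcc_of_le (by linarith), integrableOn_Icc_iff_integrableOn_Ioc]
      exact hi.mono_set Ioc_subset_Ioi_self
    rw [← uIcc_of_le (by linarith)]
    exact intervalIntegral.continuousOn_primitive_interval hIcc a left_mem_uIcc
  refine ((hprimitive.mono_of_mem_nhdsWithin (Icc_mem_nhdsGE (by linarith))).sub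
    (continuousWithinAt_const (b := ∫ s in Ioi a, f s))).congr (fun u hu => ?_) ?_
  exacts [eq_intervalIntegral_sub_of_eq_neg_integral_Ioi hi hF hu,
    eq_intervalIntegral_sub_of_eq_neg_integral_Ioi hi hF le_rfl]

lemma tendsto_zero_of_eq_neg_integral_Ioi (hF : ∀ u ≥ a, F u = -∫ s in Ioi u, f s) :
    Tendsto F atTop (𝓝 0) := by
  have htail := (tendsto_integral_Ioi_zero (f := f) (μ := volume) tendsto_id).neg
  rw [neg_zero] at htail
  refine htail.congr' ?_
  filter_upwards [eventually_ge_atTop a] with u hu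
  exact (hF u hu).symm

end TailIntegral

section DecreasingToZero

variable {q φ : ℝ → ℝ} {t : ℝ} {m : ℕ}

lemma integral_Ioi_neg_deriv_mul_pow_eq (hm : m ≠ 0) (hφt : ContinuousWithinAt φ (Ici t) t)
    (hφ' : ∀ x ∈ Ioi t, HasDerivAt φ (q x) x) (hφ_lim : Tendsto φ atTop (𝓝 0))
    (hq : ∀ x ∈ Ioi t, q x ≤ 0) (hφ : ∀ x ∈ Ioi t, 0 ≤ φ x) :
    IntegrableOn (fun x => -q x * φ x ^ (m - 1)) (Ioi t) ∧
      ∫ x in Ioi t, -q x * φ x ^ (m - 1) = φ t ^ m / m := by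
  have hderiv : ∀ x ∈ Ioi t,
      HasDerivAt (fun y => -φ y ^ m / m) (-q x * φ x ^ (m - 1)) x := fun x hx => by
    refine (((hφ' x hx).pow m).neg.div_const (m : ℝ)).congr_deriv ?_
    field_simp
  have hcont : ContinuousWithinAt (fun y => -φ y ^ m / m) (Ici t) t :=
    (hφt.pow m).neg.div_const _
  have hlim : Tendsto (fun y => -φ y ^ m / m) atTop (𝓝 0) := by
    simpa [hm] using (hφ_lim.pow m).neg.div_const (m : ℝ)
  have hnonneg : ∀ x ∈ Ioi t, 0 ≤ -q x * φ x ^ (m - 1) := fun x hx =>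
    mul_nonneg (neg_nonneg.2 (hq x hx)) (pow_nonneg (hφ x hx) _)
  refine ⟨integrableOn_Ioi_deriv_of_nonneg hcont hderiv hnonneg hlim, ?_⟩
  rw [integral_Ioi_of_hasDerivAt_of_nonneg hcont hderiv hnonneg hlim]
  ring

lemma integral_Ioi_sq_mul_pow_le (hm : m ≠ 0) (hφt : ContinuousWithinAt φ (Ici t) t)
    (hφ' : ∀ x ∈ Ioi t, HasDerivAt φ (q x) x) (hφ_lim : Tendsto φ atTop (𝓝 0))
    (hq : ∀ x ∈ Ioi t, q x ≤ 0) (hφ : ∀ x ∈ Ioi t, 0 ≤ φ x)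
    (hq_cont : ContinuousOn q (Ioi t)) (hq_ge : ∀ x ∈ Ioi t, q t ≤ q x) :
    IntegrableOn (fun x => q x ^ 2 * φ x ^ (m - 1)) (Ioi t) ∧
      ∫ x in Ioi t, q x ^ 2 * φ x ^ (m - 1) ≤ -q t * φ t ^ m / m := by
  obtain ⟨hdom, hval⟩ := integral_Ioi_neg_deriv_mul_pow_eq hm hφt hφ' hφ_lim hq hφ
  have hbound : ∀ x ∈ Ioi t, q x ^ 2 * φ x ^ (m - 1) ≤ -q t * (-q x * φ x ^ (m - 1)) :=
    fun x hx => by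
      have hfactor : 0 ≤ -q x * φ x ^ (m - 1) :=
        mul_nonneg (neg_nonneg.2 (hq x hx)) (pow_nonneg (hφ x hx) _)
      calc q x ^ 2 * φ x ^ (m - 1) = -q x * (-q x * φ x ^ (m - 1)) := by ring
        _ ≤ -q t * (-q x * φ x ^ (m - 1)) :=
          mul_le_mul_of_nonneg_right (neg_le_neg (hq_ge x hx)) hfactor
  have hφ_cont : ContinuousOn φ (Ioi t) := fun x hx =>
    (hφ' x hx).continuousAt.continuousWithinAt
  have hint_sq : IntegrableOn (fun x => q x ^ 2 * φ x ^ (m - 1)) (Ioi t) := by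
    refine (hdom.const_mul (-q t)).mono'
      (((hq_cont.pow 2).mul (hφ_cont.pow _)).aestronglyMeasurable measurableSet_Ioi) ?_
    refine (ae_restrict_iff' measurableSet_Ioi).2 (.of_forall fun x hx => ?_)
    rw [Real.norm_of_nonneg (mul_nonneg (sq_nonneg _) (pow_nonneg (hφ x hx) _))]
    exact hbound x hx
  refine ⟨hint_sq, ?_⟩
  calc ∫ x in Ioi t, q x ^ 2 * φ x ^ (m - 1)
      ≤ ∫ x in Ioi t, -q t * (-q x * φ x ^ (m - 1)) :=
        setIntegral_mono_on hint_sq (hdom.const_mul _) measurableSet_Ioi hbound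
    _ = -q t * φ t ^ m / m := by rw [integral_const_mul, hval, mul_div_assoc]

end DecreasingToZero

theorem integral_estimate_Q2_phi_general
    (T : ℝ)
    (Q₁ : ℝ → ℝ) (hQ₁c : ContinuousOn Q₁ (Set.Ici T))
    (hQ₁i : ∀ t ≥ T, IntegrableOn (fun s => Q₁ s ^ 2) (Set.Ioi t))
    (Q₂ φ : ℝ → ℝ)
    (hQ₂ : ∀ t ≥ T, Q₂ t = -∫ s in Set.Ioi t, Q₁ s ^ 2)
    (hQ₂i : ∀ t ≥ T, IntegrableOn Q₂ (Set.Ioi t))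
    (hφ : ∀ t ≥ T, φ t = -∫ s in Set.Ioi t, Q₂ s) :
    ∀ m : ℕ, 1 ≤ m → ∀ t ≥ T,
      IntegrableOn (fun s => Q₂ s ^ 2 * φ s ^ (m - 1)) (Set.Ioi t) ∧
      ∫ s in Set.Ioi t, Q₂ s ^ 2 * φ s ^ (m - 1)
        ≤ (-(Q₂ t)) * φ t ^ m / m := by
  intro m hm t ht
  have hQ₂' : ∀ x > T, HasDerivAt Q₂ (Q₁ x ^ 2) x := fun x hx =>
    hasDerivAt_of_eq_neg_integral_Ioi (hQ₁i T le_rfl) hQ₂ hx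
      ((hQ₁c.continuousAt (Ici_mem_nhds hx)).pow 2)
  have hφ' : ∀ x > T, HasDerivAt φ (Q₂ x) x := fun x hx =>
    hasDerivAt_of_eq_neg_integral_Ioi (hQ₂i T le_rfl) hφ hx (hQ₂' x hx).continuousAt
  have hQ₂_nonpos : ∀ x ≥ T, Q₂ x ≤ 0 := fun x hx => by
    rw [hQ₂ x hx, neg_nonpos]
    exact setIntegral_nonneg measurableSet_Ioi fun _ _ => sq_nonneg _
  have hQ₂_ge : ∀ x ≥ t, Q₂ t ≤ Q₂ x := fun x hx => by
    rw [hQ₂ t ht, hQ₂ x (ht.trans hx), neg_le_neg_iff]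
    exact setIntegral_mono_set (hQ₁i t ht) (.of_forall fun _ => sq_nonneg _)
      (Ioi_subset_Ioi hx).eventuallyLE
  have hφ_nonneg : ∀ x ≥ T, 0 ≤ φ x := fun x hx => by
    rw [hφ x hx, ← integral_neg]
    exact setIntegral_nonneg measurableSet_Ioi fun y hy =>
      neg_nonneg.2 (hQ₂_nonpos y (hx.trans (le_of_lt hy)))
  have hφt : ContinuousWithinAt φ (Ici t) t := by
    rcases ht.eq_or_lt with rfl | hTt
    · exact continuousWithinAt_Ici_of_eq_neg_integral_Ioi (hQ₂i T le_rfl) hφ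
    · exact (hφ' t hTt).continuousAt.continuousWithinAt
  have hTx : ∀ x ∈ Ioi t, T < x := fun x hx => ht.trans_lt hx
  exact integral_Ioi_sq_mul_pow_le (by omega) hφt (fun x hx => hφ' x (hTx x hx))
    (tendsto_zero_of_eq_neg_integral_Ioi hφ) (fun x hx => hQ₂_nonpos x (hTx x hx).le)
    (fun x hx => hφ_nonneg x (hTx x hx).le)
    (fun x hx => (hQ₂' x (hTx x hx)).continuousAt.continuousWithinAt)
    (fun x hx => hQ₂_ge x (le_of_lt hx))

/-- Key integral estimate in the proof of Lemma 3.2: with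
`Q₂(t) = -∫_t^∞ Q₁(s)² ds` and `φ(t) = -∫_t^∞ Q₂(s) ds`, one has
`∫_t^∞ Q₂(s)² φ(s)^(m-1) ds ≤ (-Q₂(t)) φ(t)^m / m` for every `m ≥ 1`. -/
theorem integral_estimate_Q2_phi
    (T : ℝ) (hT : 0 ≤ T)
    (Q₁ : ℝ → ℝ) (hQ₁c : ContinuousOn Q₁ (Set.Ici T))
    (hQ₁i : ∀ t ≥ T, IntegrableOn (fun s => Q₁ s ^ 2) (Set.Ioi t))
    (Q₂ φ : ℝ → ℝ)
    (hQ₂ : ∀ t ≥ T, Q₂ t = -∫ s in Set.Ioi t, Q₁ s ^ 2)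
    (hQ₂i : ∀ t ≥ T, IntegrableOn Q₂ (Set.Ioi t))
    (hφ : ∀ t ≥ T, φ t = -∫ s in Set.Ioi t, Q₂ s) :
    ∀ m : ℕ, 1 ≤ m → ∀ t ≥ T,
      IntegrableOn (fun s => Q₂ s ^ 2 * φ s ^ (m - 1)) (Set.Ioi t) ∧
      ∫ s in Set.Ioi t, Q₂ s ^ 2 * φ s ^ (m - 1)
        ≤ (-(Q₂ t)) * φ t ^ m / m :=
  integral_estimate_Q2_phi_general T Q₁ hQ₁c hQ₁i Q₂ φ hQ₂ hQ₂i hφ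
end

section
/- Let T ≥ 0, let 0 < α ≤ 1 and β with 2β ≥ α + 1, and let b : [T,∞) → ℝ be continuously differentiable. Suppose there are constants b₀, b₁, b₂ > 0 such that for all T ≤ s ≤ t: |∫_s^t b(σ) dσ| ≤ b₀, |b(t)| ≤ b₁(1+t)^{−α}, and |b'(t)| ≤ b₂(1+t)^{−2β}. Then there exist constants N ≥ 2b₁ and K₁ > 0 such that for every r > 0 and every twice continuously differentiable solution w : [T,∞) → ℂ of w''(t) + r² w(t) + 2b(t) w'(t) = 0, setting t_r := max{T, (N r^{−1})^{1/α} − 1} and |W(t)|² := |w'(t)|² + r²|w(t)|², one has K₁^{−1} |W(t_r)| ≤ |W(t)| ≤ K₁ |W(t_r)| for all t ≥ t_r, with K₁ independent of r and of w. -/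
/-!
Instead of diagonalising the first-order system, work with the modified energy
`F = ‖w' + b w‖² + (r² - b²)‖w‖²`. In the hyperbolic zone `|b| ≤ r / 2`, so `F` is comparable
to `|W|² = ‖w'‖² + r²‖w‖²` up to a factor `2`, and along solutions
`F' = -2bF + 2b'(⟪w, w' + bw⟫ - b‖w‖²)` with `|2b'(…)| ≤ 4|b'| F / r`.
Gronwall's inequality then bounds `F t / F t_r` above and below by
`exp (± (2 |∫_{t_r}^t b| + 4 r⁻¹ ∫_{t_r}^t |b'|))`. The first integral is at most `b₀`; the second is
at most a multiple of `r⁻¹ (1 + t_r)^(1-2β) ≤ r⁻¹ (1 + t_r)^(-α) ≤ 1 / N`, because `2β ≥ α + 1`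
and `t_r` lies on the boundary of the zone.
-/

open Set
open scoped RealInnerProductSpace

theorem le_mul_exp_sub_of_hasDerivWithinAt_le {a t : ℝ} {F f P p : ℝ → ℝ}
    (hF : ∀ s ∈ Ici a, HasDerivWithinAt F (f s) (Ici a) s)
    (hP : ∀ s ∈ Ici a, HasDerivWithinAt P (p s) (Ici a) s)
    (hfp : ∀ s ∈ Ici a, f s ≤ p s * F s) (ht : a ≤ t) :
    F t ≤ F a * Real.exp (P t - P a) := by
  have hd : ∀ s ∈ Ici a, HasDerivWithinAt (fun s => F s * Real.exp (-P s))
      (f s * Real.exp (-P s) + F s * (Real.exp (-P s) * -p s)) (Ici a) s :=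
    fun s hs => (hF s hs).mul (hP s hs).neg.exp
  have hanti : AntitoneOn (fun s => F s * Real.exp (-P s)) (Ici a) := by
    refine antitoneOn_of_hasDerivWithinAt_nonpos (convex_Ici a)
      (fun s hs => (hd s hs).continuousWithinAt) (fun s hs => ?_) (fun s hs => ?_)
      (f' := fun s => f s * Real.exp (-P s) + F s * (Real.exp (-P s) * -p s))
    · rw [interior_Ici] at hs ⊢
      exact (hd s (Ioi_subset_Ici_self hs)).mono Ioi_subset_Ici_self
    · rw [interior_Ici] at hs
      nlinarith [hfp s (Ioi_subset_Ici_self hs), Real.exp_pos (-P s)]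
  calc F t = F t * Real.exp (-P t) * Real.exp (P t) := by
        rw [mul_assoc, ← Real.exp_add, neg_add_cancel, Real.exp_zero, mul_one]
    _ ≤ F a * Real.exp (-P a) * Real.exp (P t) :=
        mul_le_mul_of_nonneg_right (hanti self_mem_Ici ht ht) (Real.exp_pos _).le
    _ = F a * Real.exp (P t - P a) := by rw [mul_assoc, ← Real.exp_add, neg_add_eq_sub]

theorem le_mul_exp_and_le_mul_exp_of_abs_sub_le {a t : ℝ} {F f C c K k : ℝ → ℝ}
    (hF : ∀ s ∈ Ici a, HasDerivWithinAt F (f s) (Ici a) s)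
    (hC : ∀ s ∈ Ici a, HasDerivWithinAt C (c s) (Ici a) s)
    (hK : ∀ s ∈ Ici a, HasDerivWithinAt K (k s) (Ici a) s)
    (hf : ∀ s ∈ Ici a, |f s - c s * F s| ≤ k s * F s) (ht : a ≤ t) :
    F t ≤ F a * Real.exp (C t - C a + (K t - K a)) ∧
      F a ≤ F t * Real.exp (-(C t - C a) + (K t - K a)) := by
  constructor
  · have := le_mul_exp_sub_of_hasDerivWithinAt_le (P := C + K) (p := c + k) hF
      (fun s hs => (hC s hs).add (hK s hs))
      (fun s hs => by have := (abs_le.1 (hf s hs)).2; simp only [Pi.add_apply]; nlinarith) ht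
    simp only [Pi.add_apply] at this
    convert this using 3; ring
  · -- applied to `-F`, the one-sided estimate bounds `F` from below
    have := le_mul_exp_sub_of_hasDerivWithinAt_le (F := -F) (P := C - K) (p := c - k)
      (fun s hs => (hF s hs).neg) (fun s hs => (hC s hs).sub (hK s hs))
      (fun s hs => by
        have := (abs_le.1 (hf s hs)).1; simp only [Pi.neg_apply, Pi.sub_apply]; nlinarith) ht
    simp only [Pi.neg_apply, Pi.sub_apply] at this
    calc F a = F a * Real.exp (C t - K t - (C a - K a)) *
          Real.exp (-(C t - C a) + (K t - K a)) := by
          rw [mul_assoc, ← Real.exp_add]; ring_nf; simp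
      _ ≤ F t * Real.exp (-(C t - C a) + (K t - K a)) := by gcongr; linarith

noncomputable def waveEnergy (r : ℝ) (w w' : ℝ → ℂ) (t : ℝ) : ℝ :=
  ‖w' t‖ ^ 2 + r ^ 2 * ‖w t‖ ^ 2

noncomputable def dampedEnergy (r : ℝ) (b : ℝ → ℝ) (w w' : ℝ → ℂ) (t : ℝ) : ℝ :=
  ‖w' t + b t * w t‖ ^ 2 + (r ^ 2 - b t ^ 2) * ‖w t‖ ^ 2

theorem waveEnergy_le_two_mul_dampedEnergy_and_dampedEnergy_le {t r : ℝ} {b : ℝ → ℝ}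
    {w w' : ℝ → ℂ} (hb : |b t| ≤ r / 2) :
    waveEnergy r w w' t ≤ 2 * dampedEnergy r b w w' t ∧
      dampedEnergy r b w w' t ≤ 2 * waveEnergy r w w' t := by
  unfold waveEnergy dampedEnergy
  have hbw : ‖(b t : ℂ) * w t‖ = |b t| * ‖w t‖ := by
    rw [norm_mul, Complex.norm_real, Real.norm_eq_abs]
  have h1 : ‖w' t + b t * w t‖ ≤ ‖w' t‖ + |b t| * ‖w t‖ := hbw ▸ norm_add_le _ _
  have h2 : ‖w' t‖ ≤ ‖w' t + b t * w t‖ + |b t| * ‖w t‖ :=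
    hbw ▸ by simpa using norm_sub_le (w' t + b t * w t) (b t * w t)
  have hb2 : b t ^ 2 ≤ r ^ 2 / 4 := by nlinarith [sq_abs (b t), abs_nonneg (b t)]
  have := sq_abs (b t)
  constructor
  · nlinarith [sq_nonneg (‖w' t + b t * w t‖ - |b t| * ‖w t‖), norm_nonneg (w' t),
      sq_nonneg ‖w t‖]
  · nlinarith [sq_nonneg (‖w' t‖ - |b t| * ‖w t‖), norm_nonneg (w' t + b t * w t),
      sq_nonneg ‖w t‖]

theorem hasDerivWithinAt_dampedEnergy {s : Set ℝ} {t r b't : ℝ} {w''t : ℂ} {b : ℝ → ℝ}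
    {w w' : ℝ → ℂ} (hb : HasDerivWithinAt b b't s t) (hw : HasDerivWithinAt w (w' t) s t)
    (hw' : HasDerivWithinAt w' w''t s t) (hode : w''t + r ^ 2 * w t + 2 * b t * w' t = 0) :
    HasDerivWithinAt (dampedEnergy r b w w')
      (-2 * b t * dampedEnergy r b w w' t +
        2 * b't * (⟪w t, w' t + b t * w t⟫ - b t * ‖w t‖ ^ 2)) s t := by
  have := (hw'.add (hb.ofReal_comp.mul hw)).norm_sq.add
    (((hb.pow 2).const_sub (r ^ 2)).mul hw.norm_sq)
  refine this.congr_deriv ?_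
  have hw'' : w''t = -(((r ^ 2 : ℝ) : ℂ) * w t + 2 * b t * w' t) := by
    push_cast; linear_combination hode
  simp only [dampedEnergy, Complex.inner, hw'', Complex.sq_norm, Complex.normSq_apply,
    Complex.mul_re, Complex.mul_im, Complex.add_re, Complex.add_im, Complex.neg_re,
    Complex.neg_im, Complex.ofReal_re, Complex.ofReal_im, Complex.conj_re, Complex.conj_im]
  norm_num
  ring

theorem mul_abs_inner_sub_le {x z : ℂ} {b r : ℝ} (hr : 0 < r) (hb : |b| ≤ r / 2) :
    r * |⟪x, z⟫ - b * ‖x‖ ^ 2| ≤ 2 * (‖z‖ ^ 2 + (r ^ 2 - b ^ 2) * ‖x‖ ^ 2) := by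
  have hinner : |⟪x, z⟫ - b * ‖x‖ ^ 2| ≤ ‖x‖ * ‖z‖ + r / 2 * ‖x‖ ^ 2 := by
    refine (abs_sub _ _).trans (add_le_add (abs_real_inner_le_norm x z) ?_)
    rw [abs_mul, abs_of_nonneg (sq_nonneg ‖x‖)]
    exact mul_le_mul_of_nonneg_right hb (sq_nonneg _)
  have hb2 : b ^ 2 ≤ r ^ 2 / 4 := by nlinarith [sq_abs b, abs_nonneg b]
  nlinarith [sq_nonneg (r * ‖x‖ - 2 * ‖z‖), sq_nonneg ‖x‖]

theorem waveEnergy_le_mul_waveEnergy_of_hasDerivWithinAt {a t r b₀ M : ℝ}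
    {b b' B k K : ℝ → ℝ} {w w' w'' : ℝ → ℂ} (hr : 0 < r)
    (hb : ∀ s ∈ Ici a, HasDerivWithinAt b (b' s) (Ici a) s)
    (hw : ∀ s ∈ Ici a, HasDerivWithinAt w (w' s) (Ici a) s)
    (hw' : ∀ s ∈ Ici a, HasDerivWithinAt w' (w'' s) (Ici a) s)
    (hode : ∀ s ∈ Ici a, w'' s + r ^ 2 * w s + 2 * b s * w' s = 0)
    (hB : ∀ s ∈ Ici a, HasDerivWithinAt B (b s) (Ici a) s)
    (hK : ∀ s ∈ Ici a, HasDerivWithinAt K (k s) (Ici a) s)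
    (hbr : ∀ s ∈ Ici a, |b s| ≤ r / 2) (hbk : ∀ s ∈ Ici a, 4 * |b' s| ≤ r * k s)
    (ht : a ≤ t) (hBt : |B t - B a| ≤ b₀) (hKt : K t - K a ≤ M) :
    waveEnergy r w w' t ≤ 4 * Real.exp (2 * b₀ + M) * waveEnergy r w w' a ∧
      waveEnergy r w w' a ≤ 4 * Real.exp (2 * b₀ + M) * waveEnergy r w w' t := by
  set F := dampedEnergy r b w w'
  have hcomp : ∀ s ∈ Ici a, waveEnergy r w w' s ≤ 2 * F s ∧ F s ≤ 2 * waveEnergy r w w' s :=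
    fun s hs => waveEnergy_le_two_mul_dampedEnergy_and_dampedEnergy_le (hbr s hs)
  have hF0 : ∀ s ∈ Ici a, 0 ≤ F s := fun s hs => by
    have := (hcomp s hs).1
    unfold waveEnergy at this
    nlinarith [sq_nonneg ‖w s‖, sq_nonneg ‖w' s‖]
  have hperturb : ∀ s ∈ Ici a,
      |2 * b' s * (⟪w s, w' s + b s * w s⟫ - b s * ‖w s‖ ^ 2)| ≤ k s * F s := fun s hs => by
    have hrF : r * |⟪w s, w' s + b s * w s⟫ - b s * ‖w s‖ ^ 2| ≤ 2 * F s :=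
      mul_abs_inner_sub_le hr (hbr s hs)
    rw [abs_mul, abs_mul, abs_two, ← mul_le_mul_iff_of_pos_left hr]
    nlinarith [mul_le_mul_of_nonneg_left hrF (abs_nonneg (b' s)),
      mul_le_mul_of_nonneg_right (hbk s hs) (hF0 s hs)]
  obtain ⟨hup, hlow⟩ := le_mul_exp_and_le_mul_exp_of_abs_sub_le (C := fun s => -2 * B s)
    (fun s hs => hasDerivWithinAt_dampedEnergy (hb s hs) (hw s hs) (hw' s hs) (hode s hs))
    (fun s hs => (hB s hs).const_mul (-2)) hK (fun s hs => by simpa using hperturb s hs) ht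
  have transfer : ∀ u ∈ Ici a, ∀ v ∈ Ici a, ∀ X, F u ≤ F v * Real.exp X → X ≤ 2 * b₀ + M →
      waveEnergy r w w' u ≤ 4 * Real.exp (2 * b₀ + M) * waveEnergy r w w' v := by
    intro u hu v hv X hX hXM
    have := mul_le_mul_of_nonneg_left (Real.exp_le_exp.2 hXM) (hF0 v hv)
    nlinarith [hcomp u hu, hcomp v hv, Real.exp_pos (2 * b₀ + M)]
  have hBt' := abs_le.1 hBt
  exact ⟨transfer t ht a self_mem_Ici _ hup (by linarith),
    transfer a self_mem_Ici t ht _ hlow (by linarith)⟩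

theorem ContinuousOn.exists_hasDerivWithinAt_Ici {f : ℝ → ℝ} {a : ℝ}
    (hf : ContinuousOn f (Ici a)) :
    ∃ F : ℝ → ℝ, (∀ t ∈ Ici a, HasDerivWithinAt F (f t) (Ici a) t) ∧
      ∀ t ∈ Ici a, F t = ∫ x in a..t, f x := by
  have hg : Continuous fun x => f (max a x) :=
    hf.comp_continuous (continuous_const.max continuous_id) fun x => le_max_left a x
  refine ⟨fun t => ∫ x in a..t, f (max a x), fun t ht => ?_, fun t ht => ?_⟩
  · simpa [max_eq_right (mem_Ici.1 ht)] using
      (hg.integral_hasStrictDerivAt a t).hasDerivAt.hasDerivWithinAt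
  · refine intervalIntegral.integral_congr fun x hx => ?_
    rw [uIcc_of_le (mem_Ici.1 ht)] at hx
    simp [max_eq_right hx.1]

theorem hasDerivAt_neg_one_add_rpow_div {γ s : ℝ} (hγ : γ ≠ 1) (hs : 0 < 1 + s) :
    HasDerivAt (fun u => -(1 + u) ^ (1 - γ) / (γ - 1)) ((1 + s) ^ (-γ)) s := by
  have h := (((hasDerivAt_id' s).const_add 1).rpow_const (p := 1 - γ)
    (Or.inl hs.ne')).neg.div_const (γ - 1)
  refine h.congr_deriv ?_
  rw [show 1 - γ - 1 = -γ by ring]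
  field_simp [sub_ne_zero.2 hγ]
  ring

theorem waveEnergy_le_mul_waveEnergy_of_abs_deriv_le_rpow {a t r γ b₀ b₂ M : ℝ}
    {b b' : ℝ → ℝ} {w w' w'' : ℝ → ℂ} (hr : 0 < r) (hγ : 1 < γ) (ha : 0 < 1 + a)
    (hb₂ : 0 ≤ b₂)
    (hb : ∀ s ∈ Ici a, HasDerivWithinAt b (b' s) (Ici a) s)
    (hw : ∀ s ∈ Ici a, HasDerivWithinAt w (w' s) (Ici a) s)
    (hw' : ∀ s ∈ Ici a, HasDerivWithinAt w' (w'' s) (Ici a) s)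
    (hode : ∀ s ∈ Ici a, w'' s + r ^ 2 * w s + 2 * b s * w' s = 0)
    (hbr : ∀ s ∈ Ici a, |b s| ≤ r / 2) (hb' : ∀ s ∈ Ici a, |b' s| ≤ b₂ * (1 + s) ^ (-γ))
    (ht : a ≤ t) (hib : |∫ σ in a..t, b σ| ≤ b₀)
    (hM : 4 * b₂ * (1 + a) ^ (1 - γ) ≤ (γ - 1) * r * M) :
    waveEnergy r w w' t ≤ 4 * Real.exp (2 * b₀ + M) * waveEnergy r w w' a ∧
      waveEnergy r w w' a ≤ 4 * Real.exp (2 * b₀ + M) * waveEnergy r w w' t := by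
  obtain ⟨B, hB, hBint⟩ := ContinuousOn.exists_hasDerivWithinAt_Ici
    fun s hs => (hb s hs).continuousWithinAt
  have hBt : |B t - B a| ≤ b₀ := by
    rwa [hBint t ht, hBint a self_mem_Ici, intervalIntegral.integral_same, sub_zero]
  set K := fun s => 4 * b₂ / r * (-(1 + s) ^ (1 - γ) / (γ - 1))
  have hK : ∀ s ∈ Ici a, HasDerivWithinAt K (4 * b₂ / r * (1 + s) ^ (-γ)) (Ici a) s :=
    fun s hs => ((hasDerivAt_neg_one_add_rpow_div hγ.ne'
      (by linarith [mem_Ici.1 hs])).const_mul _).hasDerivWithinAt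
  have hbk : ∀ s ∈ Ici a, 4 * |b' s| ≤ r * (4 * b₂ / r * (1 + s) ^ (-γ)) := fun s hs => by
    have := hb' s hs
    field_simp
    linarith
  have hKt : K t - K a ≤ M := by
    have ht0 : 0 ≤ (1 + t) ^ (1 - γ) := Real.rpow_nonneg (by linarith) _
    have hγ1 : 0 < γ - 1 := by linarith
    calc K t - K a = 4 * b₂ * ((1 + a) ^ (1 - γ) - (1 + t) ^ (1 - γ)) / ((γ - 1) * r) := by
          simp only [K]; field_simp; ring
      _ ≤ M := by rw [div_le_iff₀ (by positivity)]; nlinarith [mul_nonneg hb₂ ht0]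
  exact waveEnergy_le_mul_waveEnergy_of_hasDerivWithinAt hr hb hw hw' hode hB hK hbr hbk ht
    hBt hKt

theorem one_add_rpow_neg_le_inv {α c tr s : ℝ} (hα : 0 < α) (hc : 0 < c)
    (htr : c ^ (1 / α) - 1 ≤ tr) (hs : tr ≤ s) : (1 + s) ^ (-α) ≤ c⁻¹ := by
  have hcs : c ^ (1 / α) ≤ 1 + s := by linarith
  have hpos : 0 < 1 + s := (Real.rpow_pos_of_pos hc _).trans_le hcs
  rw [Real.rpow_neg hpos.le]
  refine inv_anti₀ hc ?_
  calc c = (c ^ (1 / α)) ^ α := by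
        rw [← Real.rpow_mul hc.le, one_div_mul_cancel hα.ne', Real.rpow_one]
    _ ≤ (1 + s) ^ α := Real.rpow_le_rpow (Real.rpow_nonneg hc.le _) hcs hα.le

theorem inv_mul_sqrt_le_sqrt_and_sqrt_le_mul_sqrt {x y K : ℝ} (hK : 0 < K)
    (hxy : x ≤ K ^ 2 * y) (hyx : y ≤ K ^ 2 * x) : K⁻¹ * √y ≤ √x ∧ √x ≤ K * √y := by
  have key : ∀ {u v : ℝ}, u ≤ K ^ 2 * v → √u ≤ K * √v := fun h => by
    simpa [Real.sqrt_mul (sq_nonneg K), Real.sqrt_sq hK.le] using Real.sqrt_le_sqrt h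
  exact ⟨(inv_mul_le_iff₀ hK).2 (key hyx), key hxy⟩

theorem zone_ZH_estimate_pos_general
    (T : ℝ) (hT : 0 ≤ T)
    (α β : ℝ) (hα0 : 0 < α) (hβ : α + 1 ≤ 2 * β)
    (b b' : ℝ → ℝ)
    (hbd : ∀ t ∈ Set.Ici T, HasDerivWithinAt b (b' t) (Set.Ici T) t)
    (b₀ b₁ b₂ : ℝ) (hb₁ : 0 < b₁) (hb₂ : 0 < b₂)
    (hib : ∀ s t : ℝ, T ≤ s → s ≤ t → |∫ σ in s..t, b σ| ≤ b₀)
    (hb : ∀ t ≥ T, |b t| ≤ b₁ * (1 + t) ^ (-α))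
    (hb' : ∀ t ≥ T, |b' t| ≤ b₂ * (1 + t) ^ (-(2 * β))) :
    ∃ N : ℝ, 2 * b₁ ≤ N ∧ ∃ K₁ > (0:ℝ), ∀ r : ℝ, 0 < r →
      ∀ w w' w'' : ℝ → ℂ,
        (∀ t ∈ Set.Ici T, HasDerivWithinAt w (w' t) (Set.Ici T) t) →
        (∀ t ∈ Set.Ici T, HasDerivWithinAt w' (w'' t) (Set.Ici T) t) →
        ContinuousOn w'' (Set.Ici T) →
        (∀ t ≥ T, w'' t + (r : ℂ) ^ 2 * w t + 2 * (b t : ℂ) * w' t = 0) →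
        ∀ tr : ℝ, tr = max T ((N * r⁻¹) ^ (1 / α) - 1) →
          ∀ t ≥ tr,
            K₁⁻¹ * Real.sqrt (‖w' tr‖ ^ 2 + r ^ 2 * ‖w tr‖ ^ 2)
              ≤ Real.sqrt (‖w' t‖ ^ 2 + r ^ 2 * ‖w t‖ ^ 2) ∧
            Real.sqrt (‖w' t‖ ^ 2 + r ^ 2 * ‖w t‖ ^ 2)
              ≤ K₁ * Real.sqrt (‖w' tr‖ ^ 2 + r ^ 2 * ‖w tr‖ ^ 2) := by
  set M := 2 * b₂ / (b₁ * (2 * β - 1))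
  refine ⟨2 * b₁, le_rfl, 2 * Real.exp (b₀ + M / 2), by positivity, ?_⟩
  intro r hr w w' w'' hw hw' _ hode tr htr t ht
  have hTtr : T ≤ tr := htr ▸ le_max_left _ _
  have hsub : Ici tr ⊆ Ici T := Ici_subset_Ici.2 hTtr
  have hzone : ∀ s ≥ tr, (1 + s) ^ (-α) ≤ r / (2 * b₁) := fun s hs => by
    convert one_add_rpow_neg_le_inv hα0 (by positivity) (htr ▸ le_max_right _ _) hs using 1
    field_simp
  have hbr : ∀ s ∈ Ici tr, |b s| ≤ r / 2 := fun s hs =>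
    calc |b s| ≤ b₁ * (1 + s) ^ (-α) := hb s (hTtr.trans hs)
      _ ≤ b₁ * (r / (2 * b₁)) := by gcongr; exact hzone s hs
      _ = r / 2 := by field_simp
  have hM : 4 * b₂ * (1 + tr) ^ (1 - 2 * β) ≤ (2 * β - 1) * r * M := by
    have htr1 : (1 + tr) ^ (1 - 2 * β) ≤ r / (2 * b₁) :=
      (Real.rpow_le_rpow_of_exponent_le (by linarith) (by linarith)).trans (hzone tr le_rfl)
    calc 4 * b₂ * (1 + tr) ^ (1 - 2 * β) ≤ 4 * b₂ * (r / (2 * b₁)) := by gcongr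
      _ = (2 * β - 1) * r * M := by
        simp only [M]; field_simp [show 2 * β - 1 ≠ 0 by linarith]; norm_num
  have hE := waveEnergy_le_mul_waveEnergy_of_abs_deriv_le_rpow hr (by linarith)
    (by linarith) hb₂.le (fun s hs => (hbd s (hsub hs)).mono hsub)
    (fun s hs => (hw s (hsub hs)).mono hsub) (fun s hs => (hw' s (hsub hs)).mono hsub)
    (fun s hs => hode s (hsub hs)) hbr (fun s hs => hb' s (hTtr.trans hs)) ht
    (hib tr t hTtr ht) hM
  have hK : (2 * Real.exp (b₀ + M / 2)) ^ 2 = 4 * Real.exp (2 * b₀ + M) := by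
    rw [mul_pow, sq (Real.exp _), ← Real.exp_add]; ring_nf
  exact inv_mul_sqrt_le_sqrt_and_sqrt_le_mul_sqrt (by positivity) (hK ▸ hE.1) (hK ▸ hE.2)

/-- Proposition 3.4 (estimate in the hyperbolic zone `Z_H`), case `α > 0`:
for `t ≥ t_r = max{T, (N r⁻¹)^(1/α) - 1}`, the energy
`|W(t)| = √(|w'(t)|² + r²|w(t)|²)` of a solution of `w'' + r²w + 2bw' = 0`
is comparable to `|W(t_r)|`, uniformly in `r` and `w`. -/
theorem zone_ZH_estimate_pos
    (T : ℝ) (hT : 0 ≤ T)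
    (α β : ℝ) (hα0 : 0 < α) (hα1 : α ≤ 1) (hβ : α + 1 ≤ 2 * β)
    (b b' : ℝ → ℝ)
    (hbd : ∀ t ∈ Set.Ici T, HasDerivWithinAt b (b' t) (Set.Ici T) t)
    (hb'c : ContinuousOn b' (Set.Ici T))
    (b₀ b₁ b₂ : ℝ) (hb₀ : 0 < b₀) (hb₁ : 0 < b₁) (hb₂ : 0 < b₂)
    (hib : ∀ s t : ℝ, T ≤ s → s ≤ t → |∫ σ in s..t, b σ| ≤ b₀)
    (hb : ∀ t ≥ T, |b t| ≤ b₁ * (1 + t) ^ (-α))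
    (hb' : ∀ t ≥ T, |b' t| ≤ b₂ * (1 + t) ^ (-(2 * β))) :
    ∃ N : ℝ, 2 * b₁ ≤ N ∧ ∃ K₁ > (0:ℝ), ∀ r : ℝ, 0 < r →
      ∀ w w' w'' : ℝ → ℂ,
        (∀ t ∈ Set.Ici T, HasDerivWithinAt w (w' t) (Set.Ici T) t) →
        (∀ t ∈ Set.Ici T, HasDerivWithinAt w' (w'' t) (Set.Ici T) t) →
        ContinuousOn w'' (Set.Ici T) →
        (∀ t ≥ T, w'' t + (r : ℂ) ^ 2 * w t + 2 * (b t : ℂ) * w' t = 0) →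
        ∀ tr : ℝ, tr = max T ((N * r⁻¹) ^ (1 / α) - 1) →
          ∀ t ≥ tr,
            K₁⁻¹ * Real.sqrt (‖w' tr‖ ^ 2 + r ^ 2 * ‖w tr‖ ^ 2)
              ≤ Real.sqrt (‖w' t‖ ^ 2 + r ^ 2 * ‖w t‖ ^ 2) ∧
            Real.sqrt (‖w' t‖ ^ 2 + r ^ 2 * ‖w t‖ ^ 2)
              ≤ K₁ * Real.sqrt (‖w' tr‖ ^ 2 + r ^ 2 * ‖w tr‖ ^ 2) :=
  zone_ZH_estimate_pos_general T hT α β hα0 hβ b b' hbd b₀ b₁ b₂ hb₁ hb₂ hib hb hb'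
end

section
/- Let T > 0 and let M : [0,T] → ℝ be continuous. Set K₀ := exp(T · sup_{0≤s≤T} |1 − M(s)|). Then for every r ≥ 0 and every twice continuously differentiable function v : [0,T] → ℂ satisfying v''(t) + r² v(t) + M(t) v(t) = 0 on [0,T], the energy E(t) := |v'(t)|² + (1 + r²)|v(t)|² satisfies E(t) ≤ K₀ E(0) for all t ∈ [0,T]. -/
open Set Real RealInnerProductSpace

/-!
Along a solution of `v'' + (r² + M) v = 0`, the energy `E = ‖v'‖² + (1 + r²)‖v‖²` has
derivative `2 (1 - M) ⟪v, v'⟫`, and `2 |⟪v, v'⟫| ≤ ‖v'‖² + ‖v‖² ≤ E`. Hence `E' ≤ K E` with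
`K = sup_{[0,T]} |1 - M|`, and Grönwall's inequality gives `E t ≤ exp (K t) E 0 ≤ exp (K T) E 0`.
-/

theorem le_mul_exp_of_hasDerivWithinAt_le_mul {f f' : ℝ → ℝ} {K a b : ℝ}
    (hf : ∀ t ∈ Icc a b, HasDerivWithinAt f (f' t) (Icc a b) t)
    (bound : ∀ t ∈ Ico a b, f' t ≤ K * f t) :
    ∀ t ∈ Icc a b, f t ≤ f a * exp (K * (t - a)) := by
  intro t ht
  have hf' : ∀ x ∈ Ico a b, HasDerivWithinAt f (f' x) (Ici x) x := fun x hx =>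
    (hf x (Ico_subset_Icc_self hx)).mono_of_mem_nhdsWithin (Icc_mem_nhdsGE_of_mem hx)
  have := le_gronwallBound_of_liminf_deriv_right_le (ε := 0)
    (fun x hx => (hf x hx).continuousWithinAt)
    (fun x hx _ hr => (hf' x hx).liminf_right_slope_le hr) le_rfl (by simpa using bound) t ht
  rwa [gronwallBound_ε0] at this

section Energy

variable {F : Type*} [NormedAddCommGroup F]

def kleinGordonEnergy (a : ℝ) (x y : F) : ℝ := ‖y‖ ^ 2 + (1 + a) * ‖x‖ ^ 2

theorem kleinGordonEnergy_nonneg (x y : F) {a : ℝ} (ha : 0 ≤ 1 + a) :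
    0 ≤ kleinGordonEnergy a x y := by
  unfold kleinGordonEnergy
  positivity

variable [InnerProductSpace ℝ F]

theorem HasDerivWithinAt.kleinGordonEnergy {v v' : ℝ → F} {w : F} {s : Set ℝ} {t a m : ℝ}
    (hv : HasDerivWithinAt v (v' t) s t) (hv' : HasDerivWithinAt v' w s t)
    (hode : w + a • v t + m • v t = 0) :
    HasDerivWithinAt (fun τ => kleinGordonEnergy a (v τ) (v' τ))
      (2 * (1 - m) * ⟪v t, v' t⟫) s t := by
  have hw : w = (-(a + m)) • v t := by
    rw [neg_smul, add_smul, eq_neg_iff_add_eq_zero, ← add_assoc, hode]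
  refine (hv'.norm_sq.add (hv.norm_sq.const_mul (1 + a))).congr_deriv ?_
  rw [hw, inner_smul_right, real_inner_comm]
  ring

theorem two_mul_inner_le_abs_mul_kleinGordonEnergy (x y : F) {a m : ℝ} (ha : 0 ≤ a) :
    2 * (1 - m) * ⟪x, y⟫ ≤ |1 - m| * kleinGordonEnergy a x y := by
  have hxy : 2 * |⟪x, y⟫| ≤ kleinGordonEnergy a x y := by
    unfold kleinGordonEnergy
    nlinarith [abs_real_inner_le_norm x y, sq_nonneg (‖x‖ - ‖y‖), sq_nonneg ‖x‖]
  calc 2 * (1 - m) * ⟪x, y⟫ ≤ |1 - m| * (2 * |⟪x, y⟫|) := by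
        rw [mul_left_comm, mul_assoc]
        exact (le_abs_self _).trans (by rw [abs_mul, abs_mul, abs_two])
    _ ≤ |1 - m| * kleinGordonEnergy a x y := by gcongr

end Energy

theorem finite_time_energy_estimate_general
    (T : ℝ)
    (M : ℝ → ℝ) (hMc : ContinuousOn M (Set.Icc 0 T)) :
    ∀ r : ℝ, 0 ≤ r → ∀ v v' v'' : ℝ → ℂ,
      (∀ t ∈ Set.Icc (0:ℝ) T, HasDerivWithinAt v (v' t) (Set.Icc (0:ℝ) T) t) →
      (∀ t ∈ Set.Icc (0:ℝ) T, HasDerivWithinAt v' (v'' t) (Set.Icc (0:ℝ) T) t) →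
      ContinuousOn v'' (Set.Icc 0 T) →
      (∀ t ∈ Set.Icc (0:ℝ) T, v'' t + (r : ℂ) ^ 2 * v t + (M t : ℂ) * v t = 0) →
      ∀ t ∈ Set.Icc (0:ℝ) T,
        ‖v' t‖ ^ 2 + (1 + r ^ 2) * ‖v t‖ ^ 2
          ≤ Real.exp (T * sSup ((fun s => |1 - M s|) '' Set.Icc (0:ℝ) T)) *
            (‖v' 0‖ ^ 2 + (1 + r ^ 2) * ‖v 0‖ ^ 2) := by
  intro r _ v v' v'' hv hv' _ hode t ht
  set K := sSup ((fun s => |1 - M s|) '' Icc (0:ℝ) T)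
  have hK : ∀ s ∈ Icc (0:ℝ) T, |1 - M s| ≤ K := fun s hs =>
    (continuousOn_const.sub hMc).abs.le_sSup_image_Icc hs
  have hderiv : ∀ s ∈ Icc (0:ℝ) T,
      HasDerivWithinAt (fun τ => kleinGordonEnergy (r ^ 2) (v τ) (v' τ))
        (2 * (1 - M s) * ⟪v s, v' s⟫) (Icc 0 T) s := fun s hs =>
    (hv s hs).kleinGordonEnergy (hv' s hs) (by simpa [Complex.real_smul] using hode s hs)
  have hE (x y : ℂ) : 0 ≤ kleinGordonEnergy (r ^ 2) x y :=
    kleinGordonEnergy_nonneg x y (by positivity)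
  have hgrowth := le_mul_exp_of_hasDerivWithinAt_le_mul hderiv (fun s hs =>
    (two_mul_inner_le_abs_mul_kleinGordonEnergy _ _ (sq_nonneg r)).trans
      (mul_le_mul_of_nonneg_right (hK s (Ico_subset_Icc_self hs)) (hE _ _))) t ht
  have hK₀ : 0 ≤ K := (abs_nonneg _).trans (hK 0 ⟨le_rfl, ht.1.trans ht.2⟩)
  calc kleinGordonEnergy (r ^ 2) (v t) (v' t)
      ≤ kleinGordonEnergy (r ^ 2) (v 0) (v' 0) * exp (K * (t - 0)) := hgrowth
    _ ≤ kleinGordonEnergy (r ^ 2) (v 0) (v' 0) * exp (K * T) := by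
      rw [sub_zero]
      exact mul_le_mul_of_nonneg_left (exp_le_exp.2 (mul_le_mul_of_nonneg_left ht.2 hK₀)) (hE _ _)
    _ = exp (T * K) * kleinGordonEnergy (r ^ 2) (v 0) (v' 0) := by rw [mul_comm, mul_comm K]

/-- Proposition 3.6 of the paper, frequency form: on a finite time interval `[0,T]`,
the Klein–Gordon energy `|v'(t)|² + (1+r²)|v(t)|²` of a solution of
`v'' + r²v + Mv = 0` is bounded by `K₀ = exp(T · sup_{[0,T]} |1 - M|)` times its
initial value. -/
theorem finite_time_energy_estimate
    (T : ℝ) (hT : 0 < T)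
    (M : ℝ → ℝ) (hMc : ContinuousOn M (Set.Icc 0 T)) :
    ∀ r : ℝ, 0 ≤ r → ∀ v v' v'' : ℝ → ℂ,
      (∀ t ∈ Set.Icc (0:ℝ) T, HasDerivWithinAt v (v' t) (Set.Icc (0:ℝ) T) t) →
      (∀ t ∈ Set.Icc (0:ℝ) T, HasDerivWithinAt v' (v'' t) (Set.Icc (0:ℝ) T) t) →
      ContinuousOn v'' (Set.Icc 0 T) →
      (∀ t ∈ Set.Icc (0:ℝ) T, v'' t + (r : ℂ) ^ 2 * v t + (M t : ℂ) * v t = 0) →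
      ∀ t ∈ Set.Icc (0:ℝ) T,
        ‖v' t‖ ^ 2 + (1 + r ^ 2) * ‖v t‖ ^ 2
          ≤ Real.exp (T * sSup ((fun s => |1 - M s|) '' Set.Icc (0:ℝ) T)) *
            (‖v' 0‖ ^ 2 + (1 + r ^ 2) * ‖v 0‖ ^ 2) :=
  finite_time_energy_estimate_general T M hMc
end

section
/- Let β ≤ 1/2 and κ > 2(1−β), and define M : [0,∞) → ℝ by M(t) := d/dt [ sin((1+t)^κ) (1+t)^{1−2β−κ} ]. Then there is a constant C > 0 such that for all t ≥ 0: |∫_t^∞ ∫_s^∞ M(σ) dσ ds| ≤ C(1+t)^{2−2β−2κ}, and consequently ∫_t^∞ |∫_s^∞ ∫_σ^∞ M(τ) dτ dσ| ds ≤ C'(1+t)^{3−2β−2κ} for some C' > 0, i.e. M satisfies the stabilization condition (M1) (the estimate (stb_inf)) with α = −2β − 2κ + 3 < 0. -/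
/-!
`IM = -f` with `f s = sin((1+s)^κ) (1+s)^(1-2β-κ)`, which is only `O((1+s)^(1-2β-κ))`. The
oscillation of `sin((1+s)^κ)` gains a factor `(1+s)^(1-κ)` in the tail integral: since
`κ sin((1+s)^κ) (1+s)^(κ-1) = -(cos((1+s)^κ))'`, integrating by parts against `(1+s)^q`,
`q = 2-2β-2κ`, leaves the boundary term `cos((1+t)^κ)(1+t)^q` and the absolutely convergent
`q ∫ cos((1+s)^κ)(1+s)^(q-1)`, both `O((1+t)^q)`. Integrating once more gives `(1+t)^(q+1)`,
and `q + 1 < 0` is exactly where `β ≤ 1/2` enters.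
-/

open MeasureTheory Filter Topology Set

lemma hasDerivAt_one_add_rpow (a : ℝ) {s : ℝ} (hs : -1 < s) :
    HasDerivAt (fun s : ℝ => (1 + s) ^ a) (a * (1 + s) ^ (a - 1)) s := by
  simpa using ((hasDerivAt_id' s).const_add 1).rpow_const (p := a) (Or.inl (by linarith))

lemma tendsto_one_add_rpow_atTop_nhds_zero {a : ℝ} (ha : a < 0) :
    Tendsto (fun s : ℝ => (1 + s) ^ a) atTop (𝓝 0) :=
  (tendsto_rpow_neg_atTop (neg_pos.2 ha)).comp (tendsto_atTop_add_const_left _ 1 tendsto_id)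
    |>.congr fun s => by simp

lemma hasDerivAt_one_add_rpow_div {e s : ℝ} (he : e ≠ -1) (hs : -1 < s) :
    HasDerivAt (fun s : ℝ => (1 + s) ^ (e + 1) / (e + 1)) ((1 + s) ^ e) s := by
  have he' : e + 1 ≠ 0 := fun h => he (by linarith)
  simpa [he'] using (hasDerivAt_one_add_rpow (e + 1) hs).div_const (e + 1)

lemma integrableOn_Ioi_one_add_rpow {e t : ℝ} (he : e < -1) (ht : -1 < t) :
    IntegrableOn (fun s : ℝ => (1 + s) ^ e) (Ioi t) :=
  integrableOn_Ioi_deriv_of_nonneg'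
    (fun s hs => hasDerivAt_one_add_rpow_div he.ne (ht.trans_le hs))
    (fun s hs => Real.rpow_nonneg (by linarith [ht.trans hs]) e)
    ((tendsto_one_add_rpow_atTop_nhds_zero (by linarith)).div_const _)

lemma integral_Ioi_one_add_rpow {e t : ℝ} (he : e < -1) (ht : -1 < t) :
    ∫ s in Ioi t, (1 + s) ^ e = -(1 + t) ^ (e + 1) / (e + 1) := by
  rw [integral_Ioi_of_hasDerivAt_of_tendsto'
    (fun s hs => hasDerivAt_one_add_rpow_div he.ne (ht.trans_le hs))
    (integrableOn_Ioi_one_add_rpow he ht)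
    ((tendsto_one_add_rpow_atTop_nhds_zero (by linarith)).div_const _)]
  ring

lemma integrableOn_Ioi_of_abs_le_one_add_rpow {u : ℝ → ℝ} {e t : ℝ} (hu : Measurable u)
    (he : e < -1) (ht : -1 < t) (hb : ∀ s > t, |u s| ≤ (1 + s) ^ e) :
    IntegrableOn u (Ioi t) :=
  (integrableOn_Ioi_one_add_rpow he ht).mono' hu.aestronglyMeasurable
    ((ae_restrict_iff' measurableSet_Ioi).2 (Eventually.of_forall fun s hs => hb s hs))

lemma abs_integral_Ioi_le_of_abs_le_one_add_rpow {u : ℝ → ℝ} {e t : ℝ} (he : e < -1)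
    (ht : -1 < t) (hu : ∀ s > t, |u s| ≤ (1 + s) ^ e) :
    |∫ s in Ioi t, u s| ≤ -(1 + t) ^ (e + 1) / (e + 1) := by
  rw [← integral_Ioi_one_add_rpow he ht]
  exact norm_integral_le_of_norm_le (f := u) (integrableOn_Ioi_one_add_rpow he ht)
    ((ae_restrict_iff' measurableSet_Ioi).2 (Eventually.of_forall fun s hs => hu s hs))

lemma lintegral_Ioi_ofReal_abs_le_of_abs_le_one_add_rpow {u : ℝ → ℝ} {C e t : ℝ}
    (he : e < -1) (ht : -1 < t) (hu : ∀ s > t, |u s| ≤ C * (1 + s) ^ e) :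
    ∫⁻ s in Ioi t, ENNReal.ofReal |u s| ≤ ENNReal.ofReal (C / -(e + 1) * (1 + t) ^ (e + 1)) :=
  calc ∫⁻ s in Ioi t, ENNReal.ofReal |u s|
      ≤ ∫⁻ s in Ioi t, ENNReal.ofReal (C * (1 + s) ^ e) :=
        setLIntegral_mono' measurableSet_Ioi fun s hs => ENNReal.ofReal_le_ofReal (hu s hs)
    _ = ENNReal.ofReal (∫ s in Ioi t, C * (1 + s) ^ e) :=
        (ofReal_integral_eq_lintegral_ofReal
          ((integrableOn_Ioi_one_add_rpow he ht).const_mul C)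
          ((ae_restrict_iff' measurableSet_Ioi).2
            (Eventually.of_forall fun s hs => (abs_nonneg _).trans (hu s hs)))).symm
    _ = ENNReal.ofReal (C / -(e + 1) * (1 + t) ^ (e + 1)) := by
        rw [integral_const_mul, integral_Ioi_one_add_rpow he ht]
        congr 1
        have : e + 1 ≠ 0 := by linarith
        field_simp

lemma tendsto_intervalIntegral_deriv_of_tendsto_zero {f : ℝ → ℝ} {a s : ℝ}
    (hf : ContDiffOn ℝ 1 f (Ioi a)) (hs : a < s) (hf0 : Tendsto f atTop (𝓝 0)) :
    Tendsto (fun R => ∫ σ in s..R, deriv f σ) atTop (𝓝 (-f s)) := by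
  have hsub : ∀ R ≥ s, uIcc s R ⊆ Ioi a := fun R hR x hx => by
    rw [uIcc_of_le hR] at hx
    exact hs.trans_le hx.1
  have hFTC : ∀ R ≥ s, ∫ σ in s..R, deriv f σ = f R - f s := fun R hR =>
    intervalIntegral.integral_eq_sub_of_hasDerivAt
      (fun x hx => (hf.differentiableOn one_ne_zero x (hsub R hR hx)).differentiableAt
        (isOpen_Ioi.mem_nhds (hsub R hR hx)) |>.hasDerivAt)
      ((hf.continuousOn_deriv_of_isOpen isOpen_Ioi le_rfl).mono (hsub R hR)).intervalIntegrable
  simpa using (hf0.sub_const (f s)).congr' <|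
    (eventually_ge_atTop s).mono fun R hR => (hFTC R hR).symm

noncomputable def chirp (κ p s : ℝ) : ℝ := Real.sin ((1 + s) ^ κ) * (1 + s) ^ p

section Chirp

variable {κ p : ℝ}

lemma abs_chirp_le {s : ℝ} (hs : -1 ≤ s) : |chirp κ p s| ≤ (1 + s) ^ p := by
  have h : 0 ≤ (1 + s) ^ p := Real.rpow_nonneg (by linarith) p
  rw [chirp, abs_mul, abs_of_nonneg h]
  exact mul_le_of_le_one_left h (Real.abs_sin_le_one _)

lemma tendsto_chirp_atTop (hp : p < 0) : Tendsto (chirp κ p) atTop (𝓝 0) :=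
  squeeze_zero_norm' ((eventually_ge_atTop 0).mono fun s hs => abs_chirp_le (by linarith))
    (tendsto_one_add_rpow_atTop_nhds_zero hp)

lemma contDiffOn_chirp : ContDiffOn ℝ 1 (chirp κ p) (Ioi (-1)) := by
  intro s hs
  have hs : 1 + s ≠ 0 := by linarith [hs.out]
  have hpow : ∀ a : ℝ, ContDiffAt ℝ 1 (fun s : ℝ => (1 + s) ^ a) s := fun a =>
    (contDiffAt_const.add contDiffAt_id).rpow_const_of_ne hs
  exact ((Real.contDiff_sin.contDiffAt.comp s (hpow κ)).mul (hpow p)).contDiffWithinAt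

lemma integrableOn_chirp {t : ℝ} (hp : p < -1) (ht : -1 < t) :
    IntegrableOn (chirp κ p) (Ioi t) :=
  integrableOn_Ioi_of_abs_le_one_add_rpow (by unfold chirp; fun_prop) hp ht
    fun s hs => abs_chirp_le (by linarith)

noncomputable def cochirp (κ q s : ℝ) : ℝ := Real.cos ((1 + s) ^ κ) * (1 + s) ^ q

lemma abs_cochirp_le {q s : ℝ} (hs : -1 ≤ s) : |cochirp κ q s| ≤ (1 + s) ^ q := by
  have h : 0 ≤ (1 + s) ^ q := Real.rpow_nonneg (by linarith) q
  rw [cochirp, abs_mul, abs_of_nonneg h]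
  exact mul_le_of_le_one_left h (Real.abs_cos_le_one _)

lemma tendsto_cochirp_atTop {q : ℝ} (hq : q < 0) : Tendsto (cochirp κ q) atTop (𝓝 0) :=
  squeeze_zero_norm' ((eventually_ge_atTop 0).mono fun s hs => abs_cochirp_le (by linarith))
    (tendsto_one_add_rpow_atTop_nhds_zero hq)

lemma hasDerivAt_cochirp {q s : ℝ} (hs : -1 < s) :
    HasDerivAt (cochirp κ q) (-(κ * chirp κ (q + κ - 1) s) + q * cochirp κ (q - 1) s) s := by
  refine ((hasDerivAt_one_add_rpow κ hs).cos.fun_mul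
    (hasDerivAt_one_add_rpow q hs)).congr_deriv ?_
  have hpow : (1 + s) ^ (q + κ - 1) = (1 + s) ^ (κ - 1) * (1 + s) ^ q := by
    rw [← Real.rpow_add (by linarith)]
    ring_nf
  simp only [chirp, cochirp, hpow]
  ring

lemma abs_integral_chirp_le {q t : ℝ} (hκ : 0 < κ) (hp : q + κ - 1 < -1) (ht : -1 < t) :
    |∫ s in Ioi t, chirp κ (q + κ - 1) s| ≤ 2 / κ * (1 + t) ^ q := by
  have hq : q < 0 := by linarith
  have hchirp := integrableOn_chirp (κ := κ) hp ht
  have hcochirp : IntegrableOn (cochirp κ (q - 1)) (Ioi t) :=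
    integrableOn_Ioi_of_abs_le_one_add_rpow (by unfold cochirp; fun_prop) (by linarith) ht
      fun s hs => abs_cochirp_le (by linarith)
  have hchirp' : IntegrableOn (fun s => -(κ * chirp κ (q + κ - 1) s)) (Ioi t) :=
    (hchirp.const_mul κ).neg
  have hcochirp' : IntegrableOn (fun s => q * cochirp κ (q - 1) s) (Ioi t) :=
    hcochirp.const_mul q
  have hFTC := integral_Ioi_of_hasDerivAt_of_tendsto'
    (fun s hs => hasDerivAt_cochirp (κ := κ) (q := q) (ht.trans_le hs))
    (hchirp'.add hcochirp') (tendsto_cochirp_atTop hq)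
  rw [integral_add hchirp' hcochirp', integral_neg,
    integral_const_mul, integral_const_mul] at hFTC
  have hcochirp_bound : |∫ s in Ioi t, cochirp κ (q - 1) s| ≤ (1 + t) ^ q / -q := by
    have := abs_integral_Ioi_le_of_abs_le_one_add_rpow (by linarith) ht
      fun s hs => abs_cochirp_le (κ := κ) (q := q - 1) (by linarith)
    rwa [sub_add_cancel, neg_div, ← div_neg] at this
  have hIBP : κ * ∫ s in Ioi t, chirp κ (q + κ - 1) s
      = cochirp κ q t + q * ∫ s in Ioi t, cochirp κ (q - 1) s := by
    linarith
  have hκ_bound : κ * |∫ s in Ioi t, chirp κ (q + κ - 1) s| ≤ 2 * (1 + t) ^ q :=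
    calc κ * |∫ s in Ioi t, chirp κ (q + κ - 1) s|
        = |cochirp κ q t + q * ∫ s in Ioi t, cochirp κ (q - 1) s| := by
          rw [← hIBP, abs_mul, abs_of_pos hκ]
      _ ≤ (1 + t) ^ q + -q * ((1 + t) ^ q / -q) := by
          refine (abs_add_le _ _).trans (add_le_add (abs_cochirp_le ht.le) ?_)
          rw [abs_mul, abs_of_neg hq]
          exact mul_le_mul_of_nonneg_left hcochirp_bound (by linarith)
      _ = 2 * (1 + t) ^ q := by rw [mul_div_cancel₀ _ (neg_ne_zero.2 hq.ne)]; ring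
  rw [div_mul_eq_mul_div, le_div_iff₀ hκ]
  linarith

end Chirp

/-- Verification of the stabilization condition (M1) (estimate (stb_inf)) for the
Example of Section 2, with the non-trivial exponent `α = -2β - 2κ + 3 < 0`:
`|∫_t^∞ ∫_s^∞ M| ≲ (1+t)^(2-2β-2κ)` and hence
`∫_t^∞ |∫_s^∞ ∫_σ^∞ M| ds ≲ (1+t)^(3-2β-2κ)`. -/
theorem example_stabilization
    (β κ : ℝ) (hβ : β ≤ 1 / 2) (hκ : 2 * (1 - β) < κ)
    (M : ℝ → ℝ)
    (hM : ∀ t, M t =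
      deriv (fun s : ℝ => Real.sin ((1 + s) ^ κ) * (1 + s) ^ (1 - 2 * β - κ)) t)
    -- `IM s = ∫_s^∞ M`, the improper integral being convergent
    (IM : ℝ → ℝ)
    (hIM : ∀ s ≥ (0:ℝ),
      Tendsto (fun R => ∫ σ in s..R, M σ) atTop (𝓝 (IM s))) :
    (-2 * β - 2 * κ + 3 < 0) ∧
    ∃ C > (0:ℝ), ∃ C' > (0:ℝ), ∀ t ≥ (0:ℝ),
      IntegrableOn IM (Set.Ioi t) ∧
      |∫ s in Set.Ioi t, IM s| ≤ C * (1 + t) ^ (2 - 2 * β - 2 * κ) ∧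
      (∫⁻ s in Set.Ioi t, ENNReal.ofReal |∫ σ in Set.Ioi s, IM σ|)
        ≤ ENNReal.ofReal (C' * (1 + t) ^ (3 - 2 * β - 2 * κ)) := by
  set q := 2 - 2 * β - 2 * κ
  have hκ0 : 0 < κ := by linarith
  have hp : q + κ - 1 < -1 := by linarith
  have hM_chirp : M = deriv (chirp κ (q + κ - 1)) := by
    rw [show q + κ - 1 = 1 - 2 * β - κ by ring]
    exact funext hM
  have hIM_chirp : ∀ s ≥ (0:ℝ), IM s = -chirp κ (q + κ - 1) s := fun s hs =>
    tendsto_nhds_unique (hIM s hs) <| hM_chirp ▸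
      tendsto_intervalIntegral_deriv_of_tendsto_zero contDiffOn_chirp (by linarith)
        (tendsto_chirp_atTop (by linarith))
  have hIM_tail : ∀ t ≥ (0:ℝ),
      IntegrableOn IM (Ioi t) ∧ |∫ s in Ioi t, IM s| ≤ 2 / κ * (1 + t) ^ q := by
    intro t ht
    have hIM_eq : EqOn IM (fun s => -chirp κ (q + κ - 1) s) (Ioi t) :=
      fun s hs => hIM_chirp s (ht.trans hs.out.le)
    refine ⟨(integrableOn_chirp hp (by linarith)).neg.congr_fun hIM_eq.symm measurableSet_Ioi,
      ?_⟩
    rw [setIntegral_congr_fun measurableSet_Ioi hIM_eq, integral_neg, abs_neg]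
    exact abs_integral_chirp_le hκ0 hp (by linarith)
  refine ⟨by linarith, 2 / κ, by positivity, 2 / κ / -(q + 1),
    div_pos (by positivity) (by linarith),
    fun t ht => ⟨(hIM_tail t ht).1, (hIM_tail t ht).2, ?_⟩⟩
  rw [show 3 - 2 * β - 2 * κ = q + 1 by ring]
  exact lintegral_Ioi_ofReal_abs_le_of_abs_le_one_add_rpow (by linarith) (by linarith)
    fun s hs => (hIM_tail s (by linarith)).2
end
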